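/- arXiv:1206.3685 — 5 statements merged into one kernel-verified Lean document; each statement's English description precedes it below -/
import Mathlib

section
/- Let F be a Minkowski norm on a finite-dimensional real vector space V. Then F satisfies the triangle inequality: F(u₁ + u₂) ≤ F(u₁) + F(u₂) for all u₁, u₂ ∈ V, with equality if and only if u₂ = αu₁ or u₁ = αu₂ for some α ≥ 0. -/
noncomputable section

/-- A Minkowski norm on a real vector space `E`: smooth away from the origin,
nonnegative, positively `1`-homogeneous, with positive definite Hessian of
`F²/2` away from the origin. -/
structure IsMinkowskiNorm {E : Type*} [NormedAddCommGroup E] [NormedSpace ℝ E]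
    (F : E → ℝ) : Prop where
  smooth_on : ContDiffOn ℝ (⊤ : ℕ∞) F {(0:E)}ᶜ
  nonneg : ∀ v, 0 ≤ F v
  pos_hom : ∀ c : ℝ, 0 < c → ∀ v, F (c • v) = c * F v
  hessian_posdef : ∀ v, v ≠ (0:E) → ∀ w, w ≠ (0:E) →
    0 < fderiv ℝ (fderiv ℝ (fun y => F y ^ 2 / 2)) v w w

open scoped ContDiff

namespace MinkAux

variable {E : Type*} [NormedAddCommGroup E] [NormedSpace ℝ E]

theorem F_zero (F : E → ℝ) (hpos_hom : ∀ c : ℝ, 0 < c → ∀ v, F (c • v) = c * F v) :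
    F 0 = 0 := by
  have := hpos_hom 2 (by norm_num) 0
  rw [smul_zero] at this; linarith

theorem f_smooth (F : E → ℝ) (hsm : ContDiffOn ℝ (⊤ : ℕ∞) F {(0:E)}ᶜ) :
    ContDiffOn ℝ (⊤ : ℕ∞) (fun y => F y ^ 2 / 2) {(0:E)}ᶜ :=
  (hsm.pow 2).div_const 2

theorem f_diffAt (F : E → ℝ) (hsm : ContDiffOn ℝ (⊤ : ℕ∞) F {(0:E)}ᶜ) {v : E} (hv : v ≠ 0) :
    DifferentiableAt ℝ (fun y => F y ^ 2 / 2) v := by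
  have h := (f_smooth F hsm).contDiffAt
    (x := v) ((isOpen_compl_singleton).mem_nhds hv)
  exact h.differentiableAt (by simp)

theorem f1_diffAt (F : E → ℝ) (hsm : ContDiffOn ℝ (⊤ : ℕ∞) F {(0:E)}ᶜ) {v : E} (hv : v ≠ 0) :
    DifferentiableAt ℝ (fderiv ℝ (fun y => F y ^ 2 / 2)) v := by
  have h := (((f_smooth F hsm).fderiv_of_isOpen (m := ∞) isOpen_compl_singleton (by simp)).contDiffAt
    (x := v) ((isOpen_compl_singleton).mem_nhds hv))
  exact h.differentiableAt (by simp)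

end MinkAux

namespace MinkAux

variable {E : Type*} [NormedAddCommGroup E] [NormedSpace ℝ E]

theorem euler1 (F : E → ℝ) (hsm : ContDiffOn ℝ (⊤ : ℕ∞) F {(0:E)}ᶜ)
    (hpos_hom : ∀ c : ℝ, 0 < c → ∀ v, F (c • v) = c * F v) {v : E} (hv : v ≠ 0) :
    fderiv ℝ (fun y => F y ^ 2 / 2) v v = F v ^ 2 := by
  set f := fun y : E => F y ^ 2 / 2 with hfdef
  have hc : HasDerivAt (fun c : ℝ => c • v) v 1 := by
    simpa using (hasDerivAt_id (1:ℝ)).smul_const v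
  have hfd : HasFDerivAt f (fderiv ℝ f v) ((1:ℝ) • v) := by
    rw [one_smul]; exact (f_diffAt F hsm hv).hasFDerivAt
  have hcomp : HasDerivAt (fun c : ℝ => f (c • v)) (fderiv ℝ f v v) 1 :=
    (hfd.comp_hasDerivAt 1 hc : HasDerivAt (f ∘ fun c : ℝ => c • v) (fderiv ℝ f v v) 1)
  have hEq : (fun c : ℝ => f (c • v)) =ᶠ[nhds (1:ℝ)] fun c => c ^ 2 * f v := by
    filter_upwards [Ioi_mem_nhds (by norm_num : (0:ℝ) < 1)] with c hc
    simp only [hfdef, hpos_hom c hc v]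
    ring
  have hpoly : HasDerivAt (fun c : ℝ => c ^ 2 * f v) ((2 * 1 ^ 1 : ℝ) * f v) 1 :=
    (hasDerivAt_pow 2 1).mul_const (f v)
  have := hcomp.unique (hpoly.congr_of_eventuallyEq hEq)
  rw [this]; simp only [hfdef]; ring

theorem euler1' (F : E → ℝ) (hsm : ContDiffOn ℝ (⊤ : ℕ∞) F {(0:E)}ᶜ)
    (hpos_hom : ∀ c : ℝ, 0 < c → ∀ v, F (c • v) = c * F v) {v : E} (hv : v ≠ 0)
    {c : ℝ} (hc : 0 < c) :
    fderiv ℝ (fun y => F y ^ 2 / 2) (c • v) v = c * F v ^ 2 := by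
  have hcv : c • v ≠ 0 := smul_ne_zero hc.ne' hv
  have h1 := euler1 F hsm hpos_hom hcv
  rw [(fderiv ℝ (fun y => F y ^ 2 / 2) (c • v)).map_smul, smul_eq_mul,
    hpos_hom c hc v, mul_pow] at h1
  exact mul_left_cancel₀ hc.ne' (by rw [h1]; ring)

theorem hess_diag (F : E → ℝ) (hsm : ContDiffOn ℝ (⊤ : ℕ∞) F {(0:E)}ᶜ)
    (hpos_hom : ∀ c : ℝ, 0 < c → ∀ v, F (c • v) = c * F v) {v : E} (hv : v ≠ 0) :
    fderiv ℝ (fderiv ℝ (fun y => F y ^ 2 / 2)) v v v = F v ^ 2 := by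
  set f := fun y : E => F y ^ 2 / 2 with hfdef
  have hc : HasDerivAt (fun c : ℝ => c • v) v 1 := by
    simpa using (hasDerivAt_id (1:ℝ)).smul_const v
  have hfd : HasFDerivAt (fderiv ℝ f) (fderiv ℝ (fderiv ℝ f) v) ((1:ℝ) • v) := by
    rw [one_smul]; exact (f1_diffAt F hsm hv).hasFDerivAt
  have hcomp1 : HasDerivAt (fun c : ℝ => fderiv ℝ f (c • v))
      (fderiv ℝ (fderiv ℝ f) v v) 1 := hfd.comp_hasDerivAt 1 hc
  have hcomp : HasDerivAt (fun c : ℝ => fderiv ℝ f (c • v) v)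
      (fderiv ℝ (fderiv ℝ f) v v v) 1 :=
    (ContinuousLinearMap.apply ℝ ℝ v).hasFDerivAt.comp_hasDerivAt 1 hcomp1
  have hEq : (fun c : ℝ => fderiv ℝ f (c • v) v) =ᶠ[nhds (1:ℝ)]
      fun c => c * F v ^ 2 := by
    filter_upwards [Ioi_mem_nhds (by norm_num : (0:ℝ) < 1)] with c hc
    exact euler1' F hsm hpos_hom hv hc
  have hpoly : HasDerivAt (fun c : ℝ => c * F v ^ 2) (1 * F v ^ 2) 1 :=
    (hasDerivAt_id (1:ℝ)).mul_const (F v ^ 2)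
  have := hcomp.unique (hpoly.congr_of_eventuallyEq hEq)
  rw [this]; ring

theorem F_pos (F : E → ℝ) (hF : IsMinkowskiNorm F) {v : E} (hv : v ≠ 0) : 0 < F v := by
  have h := hF.hessian_posdef v hv v hv
  rw [hess_diag F hF.smooth_on hF.pos_hom hv] at h
  rcases (hF.nonneg v).lt_or_eq with h' | h'
  · exact h'
  · exfalso; rw [← h'] at h; simp at h

end MinkAux

namespace MinkAux

variable {E : Type*} [NormedAddCommGroup E] [NormedSpace ℝ E]

theorem strict_seg (F : E → ℝ) (hF : IsMinkowskiNorm F) {x y : E} (hx : x ≠ 0)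
    (hxy : ∀ r : ℝ, y ≠ r • x) {a b : ℝ} (ha : 0 < a) (hb : 0 < b) (hab : a + b = 1) :
    F (a • x + b • y) ^ 2 / 2 < a * (F x ^ 2 / 2) + b * (F y ^ 2 / 2) := by
  set f := fun y : E => F y ^ 2 / 2 with hfdef
  set d := y - x with hddef
  have hdne : d ≠ 0 := sub_ne_zero.2 (fun h => hxy 1 (by rw [h, one_smul]))
  set c : ℝ → E := fun τ => x + τ • d with hcdef
  have hc0 : ∀ τ : ℝ, c τ ≠ 0 := by
    intro τ h
    rcases eq_or_ne τ 0 with h0 | h0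
    · apply hx; simpa [hcdef, h0] using h
    · apply hxy ((τ - 1)/τ)
      apply smul_right_injective E h0
      have h' : x + τ • (y - x) = 0 := h
      have : τ • y = (τ - 1) • x := by
        rw [smul_sub] at h'
        rw [sub_smul, one_smul]
        linear_combination (norm := module) h'
      show τ • y = τ • (((τ - 1) / τ) • x)
      rw [this, smul_smul]
      congr 1
      field_simp
  have hcder : ∀ τ : ℝ, HasDerivAt c d τ := by
    intro τ
    exact ((hasDerivAt_const τ x).add ((hasDerivAt_id τ).smul_const d)).congr_deriv (by simp)
  set g : ℝ → ℝ := fun τ => f (c τ) with hgdef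
  have hd1 : ∀ τ : ℝ, HasDerivAt g (fderiv ℝ f (c τ) d) τ := fun τ =>
    ((f_diffAt F hF.smooth_on (hc0 τ)).hasFDerivAt).comp_hasDerivAt τ (hcder τ)
  have hderiv_g : deriv g = fun τ => fderiv ℝ f (c τ) d := funext fun τ => (hd1 τ).deriv
  have hd2 : ∀ τ : ℝ, HasDerivAt (fun σ => fderiv ℝ f (c σ) d)
      (fderiv ℝ (fderiv ℝ f) (c τ) d d) τ := fun τ =>
    (ContinuousLinearMap.apply ℝ ℝ d).hasFDerivAt.comp_hasDerivAt τ
      (((f1_diffAt F hF.smooth_on (hc0 τ)).hasFDerivAt).comp_hasDerivAt τ (hcder τ))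
  have hgcont : Continuous g := by
    apply ((f_smooth F hF.smooth_on).continuousOn).comp_continuous
    · exact (continuous_const.add (continuous_id.smul continuous_const))
    · exact hc0
  have h2 : ∀ τ : ℝ, 0 < deriv^[2] g τ := by
    intro τ
    have hit : deriv^[2] g τ = deriv (deriv g) τ := by
      simp [Function.iterate_succ_apply']
    rw [hit, hderiv_g, (hd2 τ).deriv]
    exact hF.hessian_posdef _ (hc0 τ) _ hdne
  have sc := strictConvexOn_univ_of_deriv2_pos hgcont h2
  have key := sc.2 (Set.mem_univ (0:ℝ)) (Set.mem_univ (1:ℝ)) zero_ne_one ha hb hab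
  have e0 : g 0 = f x := by simp [hgdef, hcdef]
  have e1 : g 1 = f y := by simp [hgdef, hcdef, hddef]
  have hcval : c (a • (0:ℝ) + b • 1) = a • x + b • y := by
    simp only [hcdef, hddef, smul_eq_mul, mul_zero, mul_one, zero_add]
    rw [smul_sub]
    have hx1 : x = (a + b) • x := by rw [hab, one_smul]
    rw [add_smul] at hx1
    nth_rewrite 1 [hx1]
    abel
  have eb : g (a • (0:ℝ) + b • 1) = f (a • x + b • y) := by
    simp only [hgdef]
    rw [hcval]
  rw [eb, e0, e1] at key
  simpa using key

end MinkAux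


/-- The triangle inequality for a Minkowski norm, with the equality case:
equality holds iff one of the vectors is a nonnegative multiple of the other. -/
theorem minkowski_triangle_inequality {E : Type*} [NormedAddCommGroup E]
    [NormedSpace ℝ E] [FiniteDimensional ℝ E] (F : E → ℝ) (hF : IsMinkowskiNorm F) :
    ∀ u₁ u₂ : E, F (u₁ + u₂) ≤ F u₁ + F u₂ ∧
      (F (u₁ + u₂) = F u₁ + F u₂ ↔ ∃ α : ℝ, 0 ≤ α ∧ (u₂ = α • u₁ ∨ u₁ = α • u₂)) := by
  intro u₁ u₂
  have F0 : F (0:E) = 0 := MinkAux.F_zero F hF.pos_hom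
  have easy : (∃ α : ℝ, 0 ≤ α ∧ (u₂ = α • u₁ ∨ u₁ = α • u₂)) →
      F (u₁ + u₂) = F u₁ + F u₂ := by
    rintro ⟨α, hα, h | h⟩
    · rcases hα.lt_or_eq with h0 | h0
      · subst h
        have h1 : u₁ + α • u₁ = (1 + α) • u₁ := by rw [add_smul, one_smul]
        rw [h1, hF.pos_hom (1+α) (by linarith) u₁, hF.pos_hom α h0 u₁]
        ring
      · subst h; rw [← h0]; simp [F0]
    · rcases hα.lt_or_eq with h0 | h0
      · subst h
        have h1 : α • u₂ + u₂ = (α + 1) • u₂ := by rw [add_smul, one_smul]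
        rw [h1, hF.pos_hom (α+1) (by linarith) u₂, hF.pos_hom α h0 u₂]
        ring
      · subst h; rw [← h0]; simp [F0]
  have strict : ¬(∃ α : ℝ, 0 ≤ α ∧ (u₂ = α • u₁ ∨ u₁ = α • u₂)) →
      F (u₁ + u₂) < F u₁ + F u₂ := by
    intro hno
    have hu₁ : u₁ ≠ 0 := by
      rintro rfl; exact hno ⟨0, le_refl 0, Or.inr (by simp)⟩
    have hu₂ : u₂ ≠ 0 := by
      rintro rfl; exact hno ⟨0, le_refl 0, Or.inl (by simp)⟩
    have hs : 0 < F u₁ := MinkAux.F_pos F hF hu₁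
    have ht : 0 < F u₂ := MinkAux.F_pos F hF hu₂
    by_cases hmul : ∃ β : ℝ, u₂ = β • u₁
    · obtain ⟨β, rfl⟩ := hmul
      have hβ0 : β ≠ 0 := by rintro rfl; simp at hu₂
      have hβneg : β < 0 := by
        rcases lt_or_gt_of_ne hβ0 with h | h
        · exact h
        · exact absurd ⟨β, le_of_lt h, Or.inl rfl⟩ hno
      have hr : 0 < F (-u₁) := MinkAux.F_pos F hF (neg_ne_zero.2 hu₁)
      have hFu₂ : F (β • u₁) = (-β) * F (-u₁) := by
        have h' : β • u₁ = (-β) • (-u₁) := by rw [neg_smul, smul_neg, neg_neg]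
        rw [h', hF.pos_hom (-β) (by linarith) (-u₁)]
      rw [hFu₂]
      have hsum : u₁ + β • u₁ = (1 + β) • u₁ := by
        nth_rewrite 1 [← one_smul ℝ u₁]
        rw [← add_smul]
      rcases lt_trichotomy (1 + β) 0 with h1 | h1 | h1
      · have h' : (1+β) • u₁ = (-(1+β)) • (-u₁) := by rw [neg_smul, smul_neg, neg_neg]
        rw [hsum, h', hF.pos_hom (-(1+β)) (by linarith) (-u₁)]
        nlinarith
      · rw [hsum, h1, zero_smul, F0]; nlinarith
      · rw [hsum, hF.pos_hom (1+β) h1 u₁]; nlinarith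
    · push_neg at hmul
      set s := F u₁ with hsdef
      set t := F u₂ with htdef
      have hst : 0 < s + t := by linarith
      set x := s⁻¹ • u₁ with hxdef
      set y := t⁻¹ • u₂ with hydef
      have hxne : x ≠ 0 := smul_ne_zero (inv_ne_zero hs.ne') hu₁
      have hxy : ∀ r : ℝ, y ≠ r • x := by
        intro r h
        apply hmul (t * (r * s⁻¹))
        calc u₂ = t • y := by
              rw [hydef, smul_smul, mul_inv_cancel₀ ht.ne', one_smul]
          _ = t • (r • (s⁻¹ • u₁)) := by rw [h, hxdef]
          _ = (t * (r * s⁻¹)) • u₁ := by rw [smul_smul, smul_smul, mul_assoc]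
      have hFx : F x = 1 := by
        rw [hxdef, hF.pos_hom _ (inv_pos.2 hs) u₁, ← hsdef, inv_mul_cancel₀ hs.ne']
      have hFy : F y = 1 := by
        rw [hydef, hF.pos_hom _ (inv_pos.2 ht) u₂, ← htdef, inv_mul_cancel₀ ht.ne']
      have hab : s/(s+t) + t/(s+t) = 1 := by field_simp
      have key := MinkAux.strict_seg F hF hxne hxy (div_pos hs hst) (div_pos ht hst) hab
      rw [hFx, hFy] at key
      have hcomb : (s/(s+t)) • x + (t/(s+t)) • y = (s+t)⁻¹ • (u₁ + u₂) := by
        rw [hxdef, hydef, smul_smul, smul_smul, smul_add]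
        congr 1
        · congr 1
          field_simp
        · congr 1
          field_simp
      rw [hcomb] at key
      have hkey2 : F ((s+t)⁻¹ • (u₁ + u₂)) ^ 2 < 1 := by nlinarith
      have hlt1 : F ((s+t)⁻¹ • (u₁ + u₂)) < 1 := by
        nlinarith [hF.nonneg ((s+t)⁻¹ • (u₁ + u₂))]
      have hrecov : F (u₁ + u₂) = (s+t) * F ((s+t)⁻¹ • (u₁ + u₂)) := by
        conv_lhs => rw [← smul_inv_smul₀ hst.ne' (u₁ + u₂)]
        rw [hF.pos_hom (s+t) hst _]
      rw [hrecov]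
      nlinarith
  constructor
  · by_cases h : ∃ α : ℝ, 0 ≤ α ∧ (u₂ = α • u₁ ∨ u₁ = α • u₂)
    · exact (easy h).le
    · exact (strict h).le
  · constructor
    · intro he
      by_contra h
      exact (strict h).ne he
    · exact easy

end
end

section
/- Let F be a Minkowski norm on a finite-dimensional real vector space V. For any y ≠ 0 and any w ∈ V, the fundamental inequality F(w) ≥ Σᵢ wⁱ F_{yⁱ}(y) holds, with equality if and only if w = αy for some α ≥ 0. -/
noncomputable section

open Filter Topology

namespace MinkAux

variable {E : Type*} [NormedAddCommGroup E] [NormedSpace ℝ E]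

/-- Derivative along the ray `t ↦ t • z` at `t = 1`. -/
theorem hasDerivAt_ray {M : Type*} [NormedAddCommGroup M] [NormedSpace ℝ M]
    (G : E → M) (z : E) (hD : DifferentiableAt ℝ G z) :
    HasDerivAt (fun t : ℝ => G (t • z)) (fderiv ℝ G z z) 1 := by
  have hcurve : HasDerivAt (fun t : ℝ => t • z) z 1 := by
    simpa using (hasDerivAt_id (1:ℝ)).smul_const z
  have hD' : HasFDerivAt G (fderiv ℝ G z) ((1:ℝ) • z) := by
    rw [one_smul]; exact hD.hasFDerivAt
  exact hD'.comp_hasDerivAt (1:ℝ) hcurve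

variable {F : E → ℝ} (hF : IsMinkowskiNorm F)
include hF

theorem contDiffAt (z : E) (hz : z ≠ 0) : ContDiffAt ℝ (⊤ : ℕ∞) F z :=
  hF.smooth_on.contDiffAt (isOpen_compl_singleton.mem_nhds hz)

theorem diffAt (z : E) (hz : z ≠ 0) : DifferentiableAt ℝ F z :=
  (contDiffAt hF z hz).differentiableAt (by simp)

theorem diffAt_fderiv (z : E) (hz : z ≠ 0) : DifferentiableAt ℝ (fderiv ℝ F) z :=
  ((contDiffAt hF z hz).fderiv_right (m := 1) (WithTop.coe_le_coe.mpr le_top)).differentiableAt one_ne_zero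

theorem F_zero_s2 : F 0 = 0 := by
  have := hF.pos_hom 2 two_pos 0
  rw [smul_zero] at this; linarith

/-- Euler's theorem: `dF_z(z) = F z`. -/
theorem euler (z : E) (hz : z ≠ 0) : fderiv ℝ F z z = F z := by
  have h1 := hasDerivAt_ray F z (diffAt hF z hz)
  have h2 : (fun t : ℝ => t * F z) =ᶠ[𝓝 (1:ℝ)] (fun t => F (t • z)) := by
    filter_upwards [isOpen_Ioi.mem_nhds (show (0:ℝ) < 1 from one_pos)] with t ht
    exact (hF.pos_hom t ht z).symm
  have h3 : HasDerivAt (fun t : ℝ => t * F z) (F z) 1 := by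
    simpa using (hasDerivAt_id (1:ℝ)).mul_const (F z)
  exact h1.unique (h3.congr_of_eventuallyEq h2.symm)

/-- 0-homogeneity of the derivative. -/
theorem fderiv_hom (c : ℝ) (hc : 0 < c) (z : E) (hz : z ≠ 0) :
    fderiv ℝ F (c • z) = fderiv ℝ F z := by
  have hcz : c • z ≠ 0 := smul_ne_zero (ne_of_gt hc) hz
  have hlin : HasFDerivAt (fun x : E => c • x) (c • ContinuousLinearMap.id ℝ E) z := by
    exact (c • ContinuousLinearMap.id ℝ E).hasFDerivAt (x := z)
  have h1 : HasFDerivAt (fun x : E => F (c • x))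
      ((fderiv ℝ F (c • z)).comp (c • ContinuousLinearMap.id ℝ E)) z := by
    exact
      ((diffAt hF _ hcz).hasFDerivAt).comp z hlin
  have hEq : (fun x : E => F (c • x)) = fun x => c * F x := funext fun x => hF.pos_hom c hc x
  have h2 : HasFDerivAt (fun x : E => F (c • x)) (c • fderiv ℝ F z) z := by
    rw [hEq]
    exact ((diffAt hF z hz).hasFDerivAt).const_mul c
  have h3 := h1.unique h2
  have h4 : (fderiv ℝ F (c • z)).comp (c • ContinuousLinearMap.id ℝ E)
      = c • fderiv ℝ F (c • z) := by
    ext x; simp [mul_comm]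
  rw [h4] at h3
  exact smul_right_injective (E →L[ℝ] ℝ) (ne_of_gt hc) h3

/-- The Hessian annihilates the base point. -/
theorem hess_z (z : E) (hz : z ≠ 0) : fderiv ℝ (fderiv ℝ F) z z = 0 := by
  have h1 := hasDerivAt_ray (fderiv ℝ F) z (diffAt_fderiv hF z hz)
  have h2 : (fun _ : ℝ => fderiv ℝ F z) =ᶠ[𝓝 (1:ℝ)] (fun t => fderiv ℝ F (t • z)) := by
    filter_upwards [isOpen_Ioi.mem_nhds (show (0:ℝ) < 1 from one_pos)] with t ht
    exact (fderiv_hom hF t ht z hz).symm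
  have h3 : HasDerivAt (fun _ : ℝ => fderiv ℝ F z) (0 : E →L[ℝ] ℝ) 1 := hasDerivAt_const _ _
  exact h1.unique (h3.congr_of_eventuallyEq h2.symm)

/-- Derivative of `F²/2`. -/
theorem hasFDerivAt_sq (z : E) (hz : z ≠ 0) :
    HasFDerivAt (fun y => F y ^ 2 / 2) (F z • fderiv ℝ F z) z := by
  have h := ((diffAt hF z hz).hasFDerivAt.mul (diffAt hF z hz).hasFDerivAt).const_mul (2⁻¹ : ℝ)
  have hfun : (fun y => F y ^ 2 / 2) = fun y => (2⁻¹ : ℝ) * (F y * F y) := by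
    funext y; ring
  rw [hfun]
  refine HasFDerivAt.congr_fderiv h ?_
  ext x
  simp
  ring

/-- The Hessian of `F²/2` in terms of `F` and its derivatives. -/
theorem hessQ (z : E) (hz : z ≠ 0) (a b : E) :
    fderiv ℝ (fderiv ℝ (fun y => F y ^ 2 / 2)) z a b
      = F z * (fderiv ℝ (fderiv ℝ F) z a b) + fderiv ℝ F z a * fderiv ℝ F z b := by
  have hGG : fderiv ℝ (fun y => F y ^ 2 / 2) =ᶠ[𝓝 z] fun x => F x • fderiv ℝ F x := by
    filter_upwards [isOpen_compl_singleton.mem_nhds hz] with x hx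
    exact (hasFDerivAt_sq hF x hx).fderiv
  have hR : HasFDerivAt (fun x => F x • fderiv ℝ F x)
      (F z • fderiv ℝ (fderiv ℝ F) z
        + (fderiv ℝ F z).smulRight (fderiv ℝ F z)) z :=
    (diffAt hF z hz).hasFDerivAt.smul (diffAt_fderiv hF z hz).hasFDerivAt
  rw [hGG.fderiv_eq, hR.fderiv]
  simp [mul_comm]

theorem F_pos_s2 (z : E) (hz : z ≠ 0) : 0 < F z := by
  have h := hF.hessian_posdef z hz z hz
  rw [hessQ hF z hz z z, hess_z hF z hz, euler hF z hz] at h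
  simp at h
  rcases (hF.nonneg z).lt_or_eq with h' | h'
  · exact h'
  · exact absurd h'.symm h

/-- Strict positivity of the Hessian of `F` transverse to the radial direction. -/
theorem hessF_pos (z : E) (hz : z ≠ 0) (u : E) (hu : ∀ c : ℝ, u ≠ c • z) :
    0 < fderiv ℝ (fderiv ℝ F) z u u := by
  set D := fderiv ℝ F with hD
  set H := fderiv ℝ (fderiv ℝ F) z with hH
  have hFz := F_pos_s2 hF z hz
  set c : ℝ := D z u / F z with hc
  set u' : E := u - c • z with hu'
  have hu'0 : u' ≠ 0 := by
    intro h0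
    exact hu c (by rw [← sub_eq_zero]; exact h0)
  have hpos := hF.hessian_posdef z hz u' hu'0
  have hDz : D z u' = 0 := by
    simp only [hu', map_sub, map_smul, smul_eq_mul]
    rw [euler hF z hz, hc]
    field_simp
    ring
  have hsymm : ∀ a b, H a b = H b a := fun a b =>
    (contDiffAt hF z hz).isSymmSndFDerivAt (by simp only [minSmoothness_of_isRCLikeNormedField]; exact WithTop.coe_le_coe.mpr le_top) a b
  have hHz : ∀ a : E, H z a = 0 := by
    intro a; rw [hH, hess_z hF z hz]; rfl
  have hHu' : H u' u' = H u u := by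
    simp only [hu', map_sub, map_smul, ContinuousLinearMap.sub_apply,
      ContinuousLinearMap.smul_apply, smul_eq_mul]
    rw [hsymm u z, hHz u, hHz z]
    ring
  rw [hessQ hF z hz u' u', hDz, hHu'] at hpos
  nlinarith

end MinkAux

/-- The fundamental inequality for a Minkowski norm: for `y ≠ 0` and any `w`,
`F w ≥ dF_y(w)`, where `dF_y(w)` is `Σᵢ wⁱ F_{yⁱ}(y)` in coordinates,
with equality iff `w = α • y` for some `α ≥ 0`. -/
theorem minkowski_fundamental_inequality {E : Type*} [NormedAddCommGroup E]
    [NormedSpace ℝ E] [FiniteDimensional ℝ E] (F : E → ℝ) (hF : IsMinkowskiNorm F) :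
    ∀ y : E, y ≠ 0 → ∀ w : E,
      fderiv ℝ F y w ≤ F w ∧
      (F w = fderiv ℝ F y w ↔ ∃ α : ℝ, 0 ≤ α ∧ w = α • y) := by
  intro y hy w
  open MinkAux in
  by_cases hmul : ∃ α : ℝ, w = α • y
  · obtain ⟨α, rfl⟩ := hmul
    have hDw : fderiv ℝ F y (α • y) = α * F y := by
      rw [map_smul, smul_eq_mul, MinkAux.euler hF y hy]
    rcases lt_trichotomy α 0 with hα | hα | hα
    · have hFw : 0 ≤ F (α • y) := hF.nonneg _
      have hlt : fderiv ℝ F y (α • y) < F (α • y) := by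
        rw [hDw]
        have := MinkAux.F_pos_s2 hF y hy
        nlinarith
      refine ⟨le_of_lt hlt, ?_, ?_⟩
      · intro h; exfalso; rw [h] at hlt; exact lt_irrefl _ hlt
      · rintro ⟨β, hβ, hw⟩
        exfalso
        have h2 : (α - β) • y = 0 := by rw [sub_smul, hw]; abel
        rcases smul_eq_zero.mp h2 with h3 | h3
        · have h4 : α = β := sub_eq_zero.mp h3
          linarith
        · exact absurd h3 hy
    · subst hα
      rw [zero_smul, map_zero, MinkAux.F_zero_s2 hF]
      exact ⟨le_refl 0, fun _ => ⟨0, le_refl 0, (zero_smul ℝ y).symm⟩, fun _ => rfl⟩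
    · have hFw : F (α • y) = α * F y := hF.pos_hom α hα y
      rw [hDw, hFw]
      exact ⟨le_refl _, fun _ => ⟨α, le_of_lt hα, rfl⟩, fun _ => rfl⟩
  · -- w is not a multiple of y : strict inequality
    set u : E := w - y with hu
    have hu_not : ∀ s : ℝ, u ≠ s • y := by
      intro s hs
      exact hmul ⟨1 + s, by rw [add_smul, one_smul, ← hs, hu]; abel⟩
    have hu0 : u ≠ 0 := fun h => hu_not 0 (by rw [h, zero_smul])
    have hγ : ∀ t : ℝ, y + t • u ≠ 0 := by
      intro t h0
      by_cases ht : t = 0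
      · subst ht; simp at h0; exact hy h0
      · refine hu_not (-t⁻¹) ?_
        have h1 : t • u = -y := by linear_combination (norm := module) h0
        calc u = t⁻¹ • (t • u) := by rw [smul_smul, inv_mul_cancel₀ ht, one_smul]
        _ = (-t⁻¹) • y := by rw [h1, smul_neg, neg_smul]
    have hγmul : ∀ t : ℝ, ∀ c : ℝ, u ≠ c • (y + t • u) := by
      intro t c hcu
      have h1 : (1 - c * t) • u = c • y := by
        linear_combination (norm := module) hcu
      by_cases hct : (1 : ℝ) - c * t = 0
      · by_cases hc0 : c = 0
        · rw [hc0] at hct; simp at hct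
        · rw [hct, zero_smul] at h1
          rcases smul_eq_zero.mp h1.symm with h | h
          · exact hc0 h
          · exact hy h
      · refine hu_not (((1 : ℝ) - c * t)⁻¹ * c) ?_
        calc u = ((1 : ℝ) - c * t)⁻¹ • (((1 : ℝ) - c * t) • u) := by
              rw [smul_smul, inv_mul_cancel₀ hct, one_smul]
        _ = (((1 : ℝ) - c * t)⁻¹ * c) • y := by rw [h1, smul_smul]
    -- the 1-dimensional restriction
    set f : ℝ → ℝ := fun t => F (y + t • u) with hf
    set d : ℝ → ℝ := fun t => fderiv ℝ F (y + t • u) u with hd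
    have hcurve : ∀ t : ℝ, HasDerivAt (fun s : ℝ => y + s • u) u t := by
      intro t
      simpa using ((hasDerivAt_id t).smul_const u).const_add y
    have hfd : ∀ t : ℝ, HasDerivAt f (d t) t := by
      intro t
      exact (MinkAux.diffAt hF _ (hγ t)).hasFDerivAt.comp_hasDerivAt t (hcurve t)
    have hdd : ∀ t : ℝ, HasDerivAt d (fderiv ℝ (fderiv ℝ F) (y + t • u) u u) t := by
      intro t
      have h1 : HasDerivAt (fun s : ℝ => fderiv ℝ F (y + s • u))
          (fderiv ℝ (fderiv ℝ F) (y + t • u) u) t :=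
        (MinkAux.diffAt_fderiv hF _ (hγ t)).hasFDerivAt.comp_hasDerivAt t (hcurve t)
      simpa using h1.clm_apply (hasDerivAt_const t u)
    have hdpos : ∀ t : ℝ, 0 < deriv d t := by
      intro t
      rw [(hdd t).deriv]
      exact MinkAux.hessF_pos hF _ (hγ t) u (hγmul t)
    have hdmono : StrictMono d := strictMono_of_deriv_pos hdpos
    obtain ⟨c, hc, hceq⟩ := exists_hasDerivAt_eq_slope f d one_pos
      (fun t _ => (hfd t).continuousAt.continuousWithinAt)
      (fun t _ => hfd t)
    have hslope : f 1 - f 0 = d c := by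
      rw [hceq]; field_simp; ring
    have hd0 : d 0 = fderiv ℝ F y w - F y := by
      rw [hd]
      simp only [zero_smul, add_zero, hu, map_sub]
      rw [MinkAux.euler hF y hy]
    have hf1 : f 1 = F w := by rw [hf]; simp [hu]
    have hf0 : f 0 = F y := by rw [hf]; simp
    have hlt : fderiv ℝ F y w < F w := by
      have h2 : d 0 < d c := hdmono (hc.1)
      rw [hf1, hf0] at hslope
      rw [hd0] at h2
      linarith
    refine ⟨le_of_lt hlt, ?_, ?_⟩
    · intro h; exfalso; rw [h] at hlt; exact lt_irrefl _ hlt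
    · rintro ⟨β, _, hw⟩; exact absurd ⟨β, hw⟩ hmul

end
end

section
/- Let (M, F) be the orthogonal product of Finsler spaces (M₁, F₁), …, (M_s, F_s). Then for any v₁ ∈ T(M₁)∖{0} and v_k ∈ T(M_k), k = 2,…,s (all based at the same point of M), F(v₁ + v₂ + ⋯ + v_s) ≥ F(v₁), with equality if and only if v_k = 0 for all k = 2,…,s. -/
set_option maxHeartbeats 1000000



open scoped Manifold
open Set

noncomputable section

noncomputable section

/-- Lemma 3.1: in an orthogonal product of Finsler spaces, at a point, the norm
of a sum of vectors tangent to the various factors is at least the norm of the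
component tangent to the first factor, with equality iff the other components
vanish.  (Stated at the level of the Minkowski norm of the product at a point:
`F` is the product norm, `Fi i` the factor norms, with the restriction and
`g`-orthogonality conditions of an orthogonal product.) -/
theorem orthogonal_product_norm_ge_factor
    {ι : Type*} [Fintype ι] [DecidableEq ι] (i₀ : ι)
    {E : ι → Type*} [∀ i, NormedAddCommGroup (E i)] [∀ i, NormedSpace ℝ (E i)]
    [∀ i, FiniteDimensional ℝ (E i)]
    (F : (∀ i, E i) → ℝ) (hF : IsMinkowskiNorm F)
    (Fi : ∀ i, E i → ℝ) (hFi : ∀ i, IsMinkowskiNorm (Fi i))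
    (hres : ∀ i (v : E i), F (Pi.single i v) = Fi i v)
    (horth : ∀ i j, i ≠ j → ∀ u : E i, u ≠ 0 → ∀ w : E j,
      fderiv ℝ (fderiv ℝ (fun z => F z ^ 2 / 2))
        (Pi.single i u) (Pi.single i u) (Pi.single j w) = 0) :
    ∀ v : ∀ i, E i, v i₀ ≠ 0 →
      Fi i₀ (v i₀) ≤ F v ∧ (F v = Fi i₀ (v i₀) ↔ ∀ j, j ≠ i₀ → v j = 0) := by
  intro v hv0
  classical
  set Ef : (∀ i, E i) → ℝ := fun z => F z ^ 2 / 2 with hEfdef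
  have hopen : IsOpen ({(0 : ∀ i, E i)}ᶜ) := isOpen_compl_singleton
  have hEsm : ContDiffOn ℝ (⊤ : ℕ∞) Ef {(0 : ∀ i, E i)}ᶜ := (hF.smooth_on.pow 2).div_const 2
  have hEat : ∀ y : ∀ i, E i, y ≠ 0 → ContDiffAt ℝ (⊤ : ℕ∞) Ef y := fun y hy =>
    hEsm.contDiffAt (hopen.mem_nhds hy)
  set D : (∀ i, E i) → ((∀ i, E i) →L[ℝ] ℝ) := fderiv ℝ Ef with hDdef
  set H : (∀ i, E i) → ((∀ i, E i) →L[ℝ] ((∀ i, E i) →L[ℝ] ℝ)) := fderiv ℝ D with hHdef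
  have hD : ∀ y : ∀ i, E i, y ≠ 0 → HasFDerivAt Ef (D y) y := fun y hy =>
    ((hEat y hy).differentiableAt (by simp)).hasFDerivAt
  have hDat : ∀ y : ∀ i, E i, y ≠ 0 → HasFDerivAt D (H y) y := fun y hy =>
    (((hEat y hy).fderiv_right (m := 1) (WithTop.coe_le_coe.mpr (le_top : ((1 + 1 : ℕ) : ℕ∞) ≤ ⊤))).differentiableAt one_ne_zero).hasFDerivAt
  -- the vectors
  set u : ∀ i, E i := Pi.single i₀ (v i₀) with hudef
  set w : ∀ i, E i := v - u with hwdef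
  have hune : u ≠ 0 := by
    intro hh
    apply hv0
    have h1 := congrFun hh i₀
    rw [hudef] at h1
    simpa using h1
  have hwi₀ : w i₀ = 0 := by simp [hwdef, hudef]
  set c : ℝ → ∀ i, E i := fun t => u + t • w with hcdef
  have hcne : ∀ t, c t ≠ 0 := by
    intro t h
    apply hv0
    have := congrFun h i₀
    simpa [hcdef, hudef, hwi₀] using this
  have hc0 : c 0 = u := by simp [hcdef]
  have hc1 : c 1 = v := by simp [hcdef, hwdef]
  -- homogeneity facts
  have hF0 : F 0 = 0 := by
    have := hF.pos_hom 2 (by norm_num) 0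
    rw [smul_zero] at this
    linarith
  have hEf_hom : ∀ s : ℝ, 0 < s → ∀ y, Ef (s • y) = s ^ 2 * Ef y := by
    intro s hs y
    simp only [hEfdef, hF.pos_hom s hs]
    ring
  -- Euler's identity: D u w = H u u w
  have euler : D u w = H u u w := by
    set ψ : ℝ → ℝ := fun s => D (s • u) w with hψdef
    have hψ1 : HasDerivAt ψ (H u u w) 1 := by
      have hline : HasDerivAt (fun s : ℝ => s • u) u 1 := by
        simpa using (hasDerivAt_id (1 : ℝ)).smul_const u
      have happ : HasFDerivAt (fun y => D y w)
          ((ContinuousLinearMap.apply ℝ ℝ w).comp (H u)) u :=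
        (ContinuousLinearMap.apply ℝ ℝ w).hasFDerivAt.comp u (hDat u hune)
      have happ' : HasFDerivAt (fun y => D y w)
          ((ContinuousLinearMap.apply ℝ ℝ w).comp (H u)) ((1:ℝ) • u) := by
        rw [one_smul]; exact happ
      have := happ'.comp_hasDerivAt 1 hline
      exact this
    have hψ2 : HasDerivAt ψ (D u w) 1 := by
      have heq : ψ =ᶠ[nhds (1 : ℝ)] fun s => s * D u w := by
        filter_upwards [eventually_gt_nhds (show (0:ℝ) < 1 by norm_num)] with s hs
        have hsu : s • u ≠ 0 := smul_ne_zero (ne_of_gt hs) hune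
        have h1 : HasFDerivAt (fun y => Ef (s • y))
            ((D (s • u)).comp (s • ContinuousLinearMap.id ℝ (∀ i, E i))) u := by
          have hsm : HasFDerivAt (fun y : ∀ i, E i => s • y)
              (s • ContinuousLinearMap.id ℝ (∀ i, E i)) u :=
            (hasFDerivAt_id u).const_smul s
          exact (hD (s • u) hsu).comp u hsm
        have h2 : HasFDerivAt (fun y => Ef (s • y)) ((s ^ 2) • D u) u := by
          have : (fun y => Ef (s • y)) = fun y => s ^ 2 • Ef y := by
            funext y; simpa using hEf_hom s hs y
          rw [this]
          exact (hD u hune).const_smul (s ^ 2)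
        have hcomp := h1.unique h2
        have hval : D (s • u) (s • w) = s ^ 2 * D u w := by
          have h3 := congrArg (fun (T : (∀ i, E i) →L[ℝ] ℝ) => T w) hcomp
          simpa [smul_eq_mul] using h3
        have hmap : D (s • u) (s • w) = s * D (s • u) w := by
          rw [map_smul]; simp
        have h4 : s * D (s • u) w = s * (s * D u w) := by
          rw [← hmap, hval]; ring
        have h5 := mul_left_cancel₀ (ne_of_gt hs) h4
        simpa [hψdef] using h5
      exact (hasDerivAt_mul_const (D u w)).congr_of_eventuallyEq heq
    exact hψ2.unique hψ1
  -- orthogonality: H u u w = 0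
  have hHuw : H u u w = 0 := by
    have hsum : w = ∑ j ∈ Finset.univ.erase i₀, Pi.single j (v j) := by
      have h2 : u + ∑ j ∈ Finset.univ.erase i₀, Pi.single j (v j) = v := by
        rw [hudef, Finset.add_sum_erase Finset.univ (fun j => Pi.single j (v j))
          (Finset.mem_univ i₀), Finset.univ_sum_single]
      rw [hwdef, sub_eq_iff_eq_add']
      exact h2.symm
    rw [hsum, map_sum]
    refine Finset.sum_eq_zero fun j hj => ?_
    have hji : i₀ ≠ j := (Finset.ne_of_mem_erase hj).symm
    exact horth i₀ j hji (v i₀) hv0 (v j)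
  have hDuw : D u w = 0 := euler.trans hHuw
  -- derivatives of h and g
  set g : ℝ → ℝ := fun t => D (c t) w with hgdef
  set h : ℝ → ℝ := fun t => Ef (c t) with hhdef
  have hline : ∀ t : ℝ, HasDerivAt c w t := by
    intro t
    have : HasDerivAt (fun t : ℝ => u + t • w) ((1:ℝ) • w) t :=
      ((hasDerivAt_id t).smul_const w).const_add u
    simpa [hcdef] using this
  have hdh : ∀ t, HasDerivAt h (g t) t := fun t =>
    (hD (c t) (hcne t)).comp_hasDerivAt t (hline t)
  have hFuv : F u = Fi i₀ (v i₀) := hres i₀ (v i₀)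
  by_cases hw0 : w = 0
  · have hv_eq : v = u := by rwa [hwdef, sub_eq_zero] at hw0
    have hFeq : F v = Fi i₀ (v i₀) := by
      calc F v = F u := by rw [hv_eq]
        _ = Fi i₀ (v i₀) := hFuv
    refine ⟨le_of_eq hFeq.symm, ⟨fun _ j hj => ?_, fun _ => hFeq⟩⟩
    rw [hv_eq, hudef]
    exact Pi.single_eq_of_ne hj _
  · -- strict case
    have hdg : ∀ t, HasDerivAt g (H (c t) w w) t := by
      intro t
      have happ : HasFDerivAt (fun y => D y w)
          ((ContinuousLinearMap.apply ℝ ℝ w).comp (H (c t))) (c t) :=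
        (ContinuousLinearMap.apply ℝ ℝ w).hasFDerivAt.comp (c t) (hDat (c t) (hcne t))
      have := happ.comp_hasDerivAt t (hline t)
      exact this
    have hgpos : ∀ t, 0 < H (c t) w w := fun t =>
      hF.hessian_posdef (c t) (hcne t) w hw0
    have hgmono : StrictMono g := by
      apply strictMono_of_deriv_pos
      intro t
      rw [(hdg t).deriv]
      exact hgpos t
    have hg0 : g 0 = 0 := by
      simp only [hgdef, hc0]
      exact hDuw
    have hhmono : StrictMonoOn h (Set.Ici (0:ℝ)) := by
      apply strictMonoOn_of_deriv_pos (convex_Ici 0)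
      · exact fun t _ => ((hdh t).differentiableAt.continuousAt).continuousWithinAt
      · intro t ht
        rw [interior_Ici] at ht
        rw [(hdh t).deriv]
        have : g 0 < g t := hgmono ht
        linarith [hg0 ▸ this]
    have hlt : h 0 < h 1 := hhmono (by norm_num) (by norm_num) (by norm_num)
    have hElt : Ef u < Ef v := by
      rw [hhdef] at hlt
      simpa [hc0, hc1] using hlt
    have hFlt : F u < F v := by
      have hsq : F u ^ 2 < F v ^ 2 := by
        simp only [hEfdef] at hElt
        linarith
      exact lt_of_pow_lt_pow_left₀ 2 (hF.nonneg v) hsq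
    have hlt' : Fi i₀ (v i₀) < F v := by rw [← hFuv]; exact hFlt
    refine ⟨le_of_lt hlt', ⟨fun heq => absurd heq (ne_of_gt hlt'), fun hall => ?_⟩⟩
    · exfalso
      apply hw0
      funext j
      by_cases hji : j = i₀
      · rw [hji]; exact hwi₀
      · have : v j = 0 := hall j hji
        simp [hwdef, hudef, Pi.single_eq_of_ne hji, this]

end

end
end

section
/- Let (V, F) be a Minkowski space (viewed as a Finsler space on the manifold V) and let G be its full group of isometries. Then G contains all translations of V, there is a G-invariant Euclidean inner product on V, and G is the semidirect product of its translation subgroup with the isotropy subgroup L at the origin. -/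
open scoped Manifold
open Set

noncomputable section

noncomputable section

/-- The Finslerian distance of a Minkowski space `(V, F)`. -/
def minkDist {V : Type*} [NormedAddCommGroup V] [NormedSpace ℝ V]
    (F : V → ℝ) (x y : V) : ℝ := F (y - x)

/-- An isometry of the Minkowski space `(V, F)`: a bijection of `V` preserving
the (possibly nonsymmetric) distance `d(x, y) = F (y - x)`. -/
def IsMinkowskiIsometry {V : Type*} [NormedAddCommGroup V] [NormedSpace ℝ V]
    (F : V → ℝ) (σ : V → V) : Prop :=
  Function.Bijective σ ∧ ∀ x y : V, minkDist F (σ x) (σ y) = minkDist F x y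

namespace MinkAux

open MeasureTheory

def NormCopy (W : Type*) : Type _ := W

variable {V : Type*} [NormedAddCommGroup V] [NormedSpace ℝ V]
variable {F : V → ℝ}

lemma zero (hF : IsMinkowskiNorm F) : F 0 = 0 := by
  have := hF.pos_hom 2 (by norm_num) 0
  simp at this
  linarith

lemma f_contDiffAt (hF : IsMinkowskiNorm F) {x : V} (hx : x ≠ 0) :
    ContDiffAt ℝ (⊤ : ℕ∞) (fun y => F y ^ 2 / 2) x := by
  have h : ContDiffOn ℝ (⊤ : ℕ∞) (fun y => F y ^ 2 / 2) {(0:V)}ᶜ :=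
    (hF.smooth_on.pow 2).div_const 2
  exact h.contDiffAt (isOpen_compl_singleton.mem_nhds hx)

lemma line_deriv1 (hF : IsMinkowskiNorm F) (p d : V) {t : ℝ} (ht : p + t • d ≠ 0) :
    HasDerivAt (fun s : ℝ => F (p + s • d) ^ 2 / 2)
      (fderiv ℝ (fun y => F y ^ 2 / 2) (p + t • d) d) t := by
  have hγ : HasDerivAt (fun s : ℝ => p + s • d) d t := by
    simpa using ((hasDerivAt_id t).smul_const d).const_add p
  have hdiff : DifferentiableAt ℝ (fun y => F y ^ 2 / 2) (p + t • d) :=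
    (f_contDiffAt hF ht).differentiableAt (by simp)
  exact hdiff.hasFDerivAt.comp_hasDerivAt t hγ

lemma line_deriv2 (hF : IsMinkowskiNorm F) (p d : V) {t : ℝ} (ht : p + t • d ≠ 0) :
    HasDerivAt (fun s : ℝ => fderiv ℝ (fun y => F y ^ 2 / 2) (p + s • d) d)
      (fderiv ℝ (fderiv ℝ (fun y => F y ^ 2 / 2)) (p + t • d) d d) t := by
  have hγ : HasDerivAt (fun s : ℝ => p + s • d) d t := by
    simpa using ((hasDerivAt_id t).smul_const d).const_add p
  have h1 : ContDiffAt ℝ (⊤ : ℕ∞) (fderiv ℝ (fun y => F y ^ 2 / 2)) (p + t • d) :=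
    (f_contDiffAt hF ht).fderiv_right (by simp)
  have h2 : HasDerivAt (fun s : ℝ => fderiv ℝ (fun y => F y ^ 2 / 2) (p + s • d))
      (fderiv ℝ (fderiv ℝ (fun y => F y ^ 2 / 2)) (p + t • d) d) t :=
    (h1.differentiableAt (by simp)).hasFDerivAt.comp_hasDerivAt t hγ
  simpa using (h2.clm_apply (hasDerivAt_const t d))

lemma pos (hF : IsMinkowskiNorm F) {v : V} (hv : v ≠ 0) : 0 < F v := by
  rcases (hF.nonneg v).lt_or_eq with h | h
  · exact h
  exfalso
  have hFv : F v = 0 := h.symm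
  have hf0 : ∀ s : ℝ, 0 < s → F (s • v) ^ 2 / 2 = 0 := by
    intro s hs; rw [hF.pos_hom s hs, hFv]; ring
  have hkey : ∀ t : ℝ, 0 < t → fderiv ℝ (fun y => F y ^ 2 / 2) (t • v) v = 0 := by
    intro t ht
    have hne : (0:V) + t • v ≠ 0 := by simpa using smul_ne_zero ht.ne' hv
    have h1 : HasDerivAt (fun s : ℝ => F ((0:V) + s • v) ^ 2 / 2)
        (fderiv ℝ (fun y => F y ^ 2 / 2) ((0:V) + t • v) v) t := line_deriv1 hF 0 v hne
    have h2 : HasDerivAt (fun s : ℝ => F ((0:V) + s • v) ^ 2 / 2) 0 t := by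
      refine (hasDerivAt_const t (0:ℝ)).congr_of_eventuallyEq ?_
      filter_upwards [Ioi_mem_nhds ht] with s hs
      simpa using hf0 s hs
    have := h1.unique h2
    simpa using this
  have hne1 : (0:V) + (1:ℝ) • v ≠ 0 := by simpa using hv
  have h3 := line_deriv2 hF 0 v hne1
  have h4 : HasDerivAt (fun s : ℝ => fderiv ℝ (fun y => F y ^ 2 / 2) ((0:V) + s • v) v) 0 1 := by
    refine (hasDerivAt_const 1 (0:ℝ)).congr_of_eventuallyEq ?_
    filter_upwards [Ioi_mem_nhds (zero_lt_one (α := ℝ))] with s hs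
    simpa using hkey s hs
  have h5 := h3.unique h4
  have h6 := hF.hessian_posdef v hv v hv
  rw [show (0:V) + (1:ℝ) • v = v by simp] at h5
  rw [h5] at h6
  exact lt_irrefl _ h6

lemma euler_s10 (hF : IsMinkowskiNorm F) {x : V} (hx : x ≠ 0) :
    fderiv ℝ (fun y => F y ^ 2 / 2) x x = F x ^ 2 := by
  have hne1 : (0:V) + (1:ℝ) • x ≠ 0 := by simpa using hx
  have h1 : HasDerivAt (fun s : ℝ => F ((0:V) + s • x) ^ 2 / 2)
      (fderiv ℝ (fun y => F y ^ 2 / 2) x x) 1 := by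
    have := line_deriv1 hF 0 x hne1
    rwa [show (0:V) + (1:ℝ) • x = x by simp] at this
  have h2 : HasDerivAt (fun s : ℝ => s ^ 2 * (F x ^ 2 / 2)) (F x ^ 2) 1 := by
    have := (hasDerivAt_pow 2 (1:ℝ)).mul_const (F x ^ 2 / 2)
    norm_num at this
    rwa [show (2:ℝ) * (F x ^ 2 / 2) = F x ^ 2 by ring] at this
  have heq : (fun s : ℝ => F ((0:V) + s • x) ^ 2 / 2) =ᶠ[nhds 1]
      (fun s : ℝ => s ^ 2 * (F x ^ 2 / 2)) := by
    filter_upwards [Ioi_mem_nhds (zero_lt_one (α := ℝ))] with s hs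
    simp only [zero_add]
    rw [hF.pos_hom s hs]
    ring
  exact h1.unique (h2.congr_of_eventuallyEq heq)

lemma f_convex_pt (hF : IsMinkowskiNorm F) {u w : V}
    (hseg : ∀ τ : ℝ, τ ∈ Icc (0:ℝ) 1 → u + τ • (w - u) ≠ 0)
    {a b : ℝ} (ha : 0 ≤ a) (hb : 0 ≤ b) (hab : a + b = 1) :
    F (a • u + b • w) ^ 2 / 2 ≤ a * (F u ^ 2 / 2) + b * (F w ^ 2 / 2) := by
  set f : V → ℝ := fun y => F y ^ 2 / 2 with hf
  have hconv : ConvexOn ℝ (Icc (0:ℝ) 1) (fun τ : ℝ => f (u + τ • (w - u))) := by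
    refine convexOn_of_hasDerivWithinAt2_nonneg (convex_Icc 0 1)
      (f := fun τ : ℝ => f (u + τ • (w - u)))
      (f' := fun τ : ℝ => fderiv ℝ f (u + τ • (w - u)) (w - u))
      (f'' := fun τ : ℝ => fderiv ℝ (fderiv ℝ f) (u + τ • (w - u)) (w - u) (w - u))
      ?_ ?_ ?_ ?_
    · intro τ hτ
      exact ((line_deriv1 hF u (w - u) (hseg τ hτ)).continuousAt).continuousWithinAt
    · intro τ hτ
      have hτ' : τ ∈ Icc (0:ℝ) 1 := interior_subset hτ
      exact (line_deriv1 hF u (w - u) (hseg τ hτ')).hasDerivWithinAt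
    · intro τ hτ
      have hτ' : τ ∈ Icc (0:ℝ) 1 := interior_subset hτ
      exact (line_deriv2 hF u (w - u) (hseg τ hτ')).hasDerivWithinAt
    · intro τ hτ
      have hτ' : τ ∈ Icc (0:ℝ) 1 := interior_subset hτ
      rcases eq_or_ne (w - u) 0 with h | h
      · simp [h]
      · exact (hF.hessian_posdef _ (hseg τ hτ') _ h).le
  have h01 : (0:ℝ) ∈ Icc (0:ℝ) 1 := by constructor <;> norm_num
  have h11 : (1:ℝ) ∈ Icc (0:ℝ) 1 := by constructor <;> norm_num
  have := hconv.2 h01 h11 ha hb hab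
  simp only [smul_eq_mul, mul_zero, mul_one, zero_add] at this
  have harg : u + b • (w - u) = a • u + b • w := by
    have : a = 1 - b := by linarith
    rw [this]; module
  rw [harg] at this
  simpa using this


lemma subadd' (hF : IsMinkowskiNorm F) (x y : V) : F (x + y) ≤ F x + F y := by
  rcases eq_or_ne x 0 with hx | hx
  · simp [hx, zero hF]
  rcases eq_or_ne y 0 with hy | hy
  · simp [hy, zero hF]
  have hsmulneg : ∀ (c : ℝ) (v : V), c < 0 → F (c • v) = -c * F (-v) := by
    intro c v hc
    have : c • v = (-c) • (-v) := by module
    rw [this, hF.pos_hom (-c) (by linarith)]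
  by_cases hcol : ∃ c : ℝ, c < 0 ∧ y = c • x
  · obtain ⟨c, hc, rfl⟩ := hcol
    have hxy : x + c • x = (1 + c) • x := by module
    rcases lt_trichotomy (1 + c) 0 with h1 | h1 | h1
    · rw [hxy, hsmulneg _ _ h1, hsmulneg _ _ hc]
      have h2 : 0 ≤ F x := hF.nonneg x
      have h3 : 0 ≤ F (-x) := hF.nonneg (-x)
      nlinarith
    · rw [hxy, show (1 + c) = (0:ℝ) from h1, zero_smul, zero hF]
      exact add_nonneg (hF.nonneg x) (hF.nonneg _)
    · rw [hxy, hF.pos_hom _ h1]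
      have h2 : 0 ≤ F x := hF.nonneg x
      have h3 : 0 ≤ F (c • x) := hF.nonneg _
      nlinarith [hsmulneg c x hc, hF.nonneg (-x)]
  · have hFx : 0 < F x := pos hF hx
    have hFy : 0 < F y := pos hF hy
    set S : ℝ := F x + F y with hS
    have hSpos : 0 < S := by positivity
    set u : V := (S / F x) • x with hu
    set w : V := (S / F y) • y with hw
    have hFu : F u = S := by
      rw [hu, hF.pos_hom _ (by positivity)]
      field_simp
    have hFw : F w = S := by
      rw [hw, hF.pos_hom _ (by positivity)]
      field_simp
    have hseg : ∀ τ : ℝ, τ ∈ Icc (0:ℝ) 1 → u + τ • (w - u) ≠ 0 := by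
      intro τ hτ heq0
      have heq : (1 - τ) • u + τ • w = 0 := by
        rw [← heq0]; module
      rcases eq_or_ne τ 0 with rfl | hτ0
      · have hu0 : u = 0 := by simpa using heq0
        rw [hu] at hu0
        rcases smul_eq_zero.mp hu0 with h | h
        · have h2 : (0:ℝ) < S / F x := by positivity
          rw [h] at h2; exact lt_irrefl _ h2
        · exact hx h
      rcases eq_or_ne τ 1 with rfl | hτ1
      · have hw0 : w = 0 := by
          have := heq; simp at this; exact this
        rw [hw] at hw0
        rcases smul_eq_zero.mp hw0 with h | h
        · have h2 : (0:ℝ) < S / F y := by positivity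
          rw [h] at h2; exact lt_irrefl _ h2
        · exact hy h
      have hτpos : 0 < τ := lt_of_le_of_ne hτ.1 (Ne.symm hτ0)
      have hτlt : τ < 1 := lt_of_le_of_ne hτ.2 hτ1
      have hτw : τ • w = (-(1 - τ)) • u := by
        have h := heq
        have : τ • w = -((1 - τ) • u) := by
          rw [add_comm] at h
          exact add_eq_zero_iff_eq_neg.mp h
        rw [this, neg_smul]
      have hwu : w = (-(1 - τ) / τ) • u := by
        calc w = τ⁻¹ • (τ • w) := by rw [smul_smul, inv_mul_cancel₀ hτ0, one_smul]
          _ = τ⁻¹ • ((-(1 - τ)) • u) := by rw [hτw]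
          _ = (-(1 - τ) / τ) • u := by rw [smul_smul]; congr 1; field_simp
      have hyw : y = (F y / S) • w := by
        rw [hw, smul_smul]
        have e : F y / S * (S / F y) = 1 := by field_simp
        rw [e, one_smul]
      have hyx : y = (F y / S * (-(1 - τ) / τ) * (S / F x)) • x := by
        calc y = (F y / S) • w := hyw
          _ = (F y / S) • ((-(1 - τ) / τ) • ((S / F x) • x)) := by rw [hwu, hu]
          _ = (F y / S * (-(1 - τ) / τ) * (S / F x)) • x := by module
      refine hcol ⟨_, ?_, hyx⟩
      have h1 : -(1 - τ) / τ < 0 := div_neg_of_neg_of_pos (by linarith) hτpos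
      have h2 : 0 < F y / S := by positivity
      have h3 : 0 < S / F x := by positivity
      nlinarith [mul_pos h2 h3, mul_pos (mul_pos h2 h3) hτpos]
    have key := f_convex_pt hF hseg (a := F x / S) (b := F y / S)
      (by positivity) (by positivity) (by field_simp; exact hS.symm)
    have harg : (F x / S) • u + (F y / S) • w = x + y := by
      rw [hu, hw]
      rw [smul_smul, smul_smul]
      have e1 : F x / S * (S / F x) = 1 := by field_simp
      have e2 : F y / S * (S / F y) = 1 := by field_simp
      rw [e1, e2, one_smul, one_smul]
    rw [harg, hFu, hFw] at key
    have key2 : F (x + y) ^ 2 ≤ S ^ 2 := by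
      have hab : F x / S + F y / S = 1 := by field_simp; exact hS.symm
      nlinarith [key]
    nlinarith [hF.nonneg (x + y), hSpos, key2]


lemma smul_neg_hom (hF : IsMinkowskiNorm F) (c : ℝ) (v : V) (hc : c < 0) :
    F (c • v) = -c * F (-v) := by
  have : c • v = (-c) • (-v) := by module
  rw [this, hF.pos_hom (-c) (by linarith)]

lemma isometry_linear {W : Type*} [NormedAddCommGroup W] [NormedSpace ℝ W] {F : W → ℝ}
    (hF : IsMinkowskiNorm F) {σ : W → W} (hbij : Function.Bijective σ)
    (hiso : ∀ x y : W, F (σ y - σ x) = F (y - x)) (h0 : σ 0 = 0) :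
    (∀ a b : W, σ (a + b) = σ a + σ b) ∧ (∀ (c : ℝ) (a : W), σ (c • a) = c • σ a) := by
  -- facts about the symmetrized norm, stated on `W`
  have key0 : F (0:W) + F (-(0:W)) = 0 := by simp [zero hF]
  have key_add : ∀ x y : W, F (x + y) + F (-(x + y)) ≤
      (F x + F (-x)) + (F y + F (-y)) := by
    intro x y
    have h1 := subadd' hF x y
    have h2 := subadd' hF (-x) (-y)
    have e : -x + -y = -(x + y) := by abel
    rw [e] at h2
    linarith
  have key_neg : ∀ x : W, F (-x) + F (-(-x)) = F x + F (-x) := by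
    intro x; rw [neg_neg]; ring
  have key_eq_zero : ∀ x : W, F x + F (-x) = 0 → x = 0 := by
    intro x hx
    by_contra hne
    have h1 : 0 < F x := pos hF hne
    have h2 : 0 ≤ F (-x) := hF.nonneg _
    linarith
  have key_smul : ∀ (c : ℝ) (x : W), F (c • x) + F (-(c • x)) ≤ ‖c‖ * (F x + F (-x)) := by
    intro c x
    rcases lt_trichotomy c 0 with hc | hc | hc
    · have e2 : -(c • x) = (-c) • x := by module
      rw [e2, hF.pos_hom (-c) (by linarith), smul_neg_hom hF c _ hc,
        Real.norm_eq_abs, abs_of_neg hc]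
      exact le_of_eq (by ring)
    · subst hc
      simp [zero hF]
    · have e2 : -(c • x) = c • (-x) := by module
      rw [e2, hF.pos_hom c hc, hF.pos_hom c hc, Real.norm_eq_abs, abs_of_pos hc]
      exact le_of_eq (by ring)
  have key_iso : ∀ x y : W, F (σ x - σ y) + F (-(σ x - σ y)) = F (x - y) + F (-(x - y)) := by
    intro x y
    have h1 := hiso y x
    have h2 := hiso x y
    have e2 : -(σ x - σ y) = σ y - σ x := by abel
    have e4 : -(x - y) = y - x := by abel
    rw [e2, e4, h1, h2]
  letI : AddCommGroup (NormCopy W) := inferInstanceAs (AddCommGroup W)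
  letI : Module ℝ (NormCopy W) := inferInstanceAs (Module ℝ W)
  let N : AddGroupNorm (NormCopy W) :=
  { toFun := fun v => F v + F (-v)
    map_zero' := key0
    add_le' := fun a b => key_add a b
    neg' := fun a => key_neg a
    eq_zero_of_map_eq_zero' := fun a ha => key_eq_zero a ha }
  letI : NormedAddCommGroup (NormCopy W) := N.toNormedAddCommGroup
  letI : NormedSpace ℝ (NormCopy W) := ⟨fun c v => key_smul c v⟩
  let e : (NormCopy W) ≃ᵢ (NormCopy W) :=
    ⟨Equiv.ofBijective (σ : NormCopy W → NormCopy W) hbij,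
      Isometry.of_dist_eq fun x y => by
        show F (-σ x + σ y) + F (-(-σ x + σ y)) = F (-x + y) + F (-(-x + y))
        rw [neg_add_eq_sub, neg_add_eq_sub]; exact key_iso y x⟩
  let hL := e.toRealLinearIsometryEquivOfMapZero (h0 : σ (0 : W) = (0 : W))
  have hLcoe : ⇑hL = σ := e.coe_toRealLinearIsometryEquivOfMapZero _
  constructor
  · intro a b
    have := hL.map_add (a : NormCopy W) (b : NormCopy W)
    rw [hLcoe] at this
    exact this
  · intro c a
    have := hL.map_smul c (a : NormCopy W)
    rw [hLcoe] at this
    exact this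


section FD
variable [FiniteDimensional ℝ V]

lemma cont (hF : IsMinkowskiNorm F) : Continuous F := by
  have hcont : ∀ x : V, x ≠ 0 → ContinuousAt F x := fun x hx =>
    (hF.smooth_on.continuousOn).continuousAt (isOpen_compl_singleton.mem_nhds hx)
  rcases subsingleton_or_nontrivial V with hs | hs
  · have : F = fun _ => F 0 := funext fun x => by rw [Subsingleton.elim x 0]
    rw [this]; exact continuous_const
  · have hsph : IsCompact (Metric.sphere (0:V) 1) := isCompact_sphere 0 1
    have hne : (Metric.sphere (0:V) 1).Nonempty := NormedSpace.sphere_nonempty.mpr (by norm_num)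
    have hFcontS : ContinuousOn F (Metric.sphere (0:V) 1) := by
      apply (hF.smooth_on.continuousOn).mono
      intro x hx
      simp only [mem_compl_iff, mem_singleton_iff]
      intro h
      rw [h] at hx
      simp at hx
    obtain ⟨z, hz, hzmax⟩ := hsph.exists_isMaxOn hne hFcontS
    rw [isMaxOn_iff] at hzmax
    have hbound : ∀ x : V, F x ≤ F z * ‖x‖ := by
      intro x
      rcases eq_or_ne x 0 with rfl | hx
      · simp [zero hF]
      · have hnx : (0:ℝ) < ‖x‖ := norm_pos_iff.mpr hx
        have hunit : ‖x‖⁻¹ • x ∈ Metric.sphere (0:V) 1 := by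
          simp [norm_smul, abs_of_pos (inv_pos.mpr hnx), inv_mul_cancel₀ hnx.ne']
        have : F x = ‖x‖ * F (‖x‖⁻¹ • x) := by
          rw [← hF.pos_hom ‖x‖ hnx, smul_smul, mul_inv_cancel₀ hnx.ne', one_smul]
        rw [this, mul_comm (F z) ‖x‖]
        exact mul_le_mul_of_nonneg_left (hzmax _ hunit) hnx.le
    rw [continuous_iff_continuousAt]
    intro x
    rcases eq_or_ne x 0 with rfl | hx
    · have h1 : Filter.Tendsto F (nhds (0:V)) (nhds 0) := by
        apply squeeze_zero (fun t => hF.nonneg t) hbound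
        have : Filter.Tendsto (fun x : V => ‖x‖) (nhds 0) (nhds 0) := by
          simpa using continuous_norm.tendsto (0:V)
        simpa using this.const_mul (F z)
      unfold ContinuousAt
      rwa [zero hF]
    · exact hcont x hx


end FD

lemma exists_invariant_form {V : Type*} [NormedAddCommGroup V] [NormedSpace ℝ V]
    [FiniteDimensional ℝ V] [Nontrivial V] (F : V → ℝ) (hF : IsMinkowskiNorm F) :
    ∃ B : LinearMap.BilinForm ℝ V, B.IsSymm ∧ (∀ v : V, v ≠ 0 → 0 < B v v) ∧
      ∀ (A : V ≃ₗ[ℝ] V), (∀ v, F (A v) = F v) → ∀ v : V, B (A v) (A v) = B v v := by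
  classical
  letI : MeasurableSpace V := borel V
  haveI : BorelSpace V := ⟨rfl⟩
  set μ : Measure V := (Module.finBasis ℝ V).addHaar with hμ
  set f : V → ℝ := fun y => F y ^ 2 / 2 with hfdef
  set Fs : V → ℝ := fun v => F v + F (-v) with hFs
  have hFs_cont : Continuous Fs := (cont hF).add ((cont hF).comp continuous_neg)
  have hFs_pos : ∀ v : V, v ≠ 0 → 0 < Fs v := fun v hv =>
    add_pos_of_pos_of_nonneg (pos hF hv) (hF.nonneg _)
  have hFs_hom : ∀ c : ℝ, 0 < c → ∀ v, Fs (c • v) = c * Fs v := by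
    intro c hc v
    simp only [hFs]
    rw [show -(c • v) = c • (-v) by module, hF.pos_hom c hc, hF.pos_hom c hc]
    ring
  -- the annulus K
  set K : Set V := Fs ⁻¹' (Icc 1 2) with hK
  have hK0 : K ⊆ {(0:V)}ᶜ := by
    intro x hx
    simp only [mem_compl_iff, mem_singleton_iff]
    rintro rfl
    have : Fs 0 = 0 := by simp [hFs, zero hF]
    have h1 := (hx : Fs 0 ∈ Icc (1:ℝ) 2).1
    rw [this] at h1
    linarith
  have hKclosed : IsClosed K := IsClosed.preimage hFs_cont isClosed_Icc
  have hKbounded : Bornology.IsBounded K := by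
    -- lower bound on the sphere
    have hsph : IsCompact (Metric.sphere (0:V) 1) := isCompact_sphere 0 1
    have hne : (Metric.sphere (0:V) 1).Nonempty := NormedSpace.sphere_nonempty.mpr (by norm_num)
    obtain ⟨m, hm, hmin⟩ := hsph.exists_isMinOn hne (hFs_cont.continuousOn)
    rw [isMinOn_iff] at hmin
    have hm0 : m ≠ 0 := by
      intro h; rw [h] at hm; simp at hm
    have hc0 : 0 < Fs m := hFs_pos m hm0
    have hlow : ∀ x : V, Fs m * ‖x‖ ≤ Fs x := by
      intro x
      rcases eq_or_ne x 0 with rfl | hx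
      · simp [hFs, zero hF]
      · have hnx : (0:ℝ) < ‖x‖ := norm_pos_iff.mpr hx
        have hunit : ‖x‖⁻¹ • x ∈ Metric.sphere (0:V) 1 := by
          simp [norm_smul, abs_of_pos (inv_pos.mpr hnx), inv_mul_cancel₀ hnx.ne']
        have : Fs x = ‖x‖ * Fs (‖x‖⁻¹ • x) := by
          rw [← hFs_hom ‖x‖ hnx, smul_smul, mul_inv_cancel₀ hnx.ne', one_smul]
        rw [this, mul_comm (Fs m) ‖x‖]
        exact mul_le_mul_of_nonneg_left (hmin _ hunit) hnx.le
    apply Bornology.IsBounded.subset (Metric.isBounded_closedBall (x := (0:V)) (r := 2 / Fs m))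
    intro x hx
    have h2 : Fs x ≤ 2 := (hx : Fs x ∈ Icc (1:ℝ) 2).2
    have := hlow x
    simp only [Metric.mem_closedBall, dist_zero_right]
    rw [le_div_iff₀ hc0, mul_comm]
    linarith
  have hKcomp : IsCompact K := Metric.isCompact_of_isClosed_isBounded hKclosed hKbounded
  have hKmeas : MeasurableSet K := hKclosed.measurableSet
  -- derivative facts
  have hf_smooth : ContDiffOn ℝ (⊤ : ℕ∞) f {(0:V)}ᶜ := (hF.smooth_on.pow 2).div_const 2
  have hDf_cont : ContinuousOn (fderiv ℝ f) {(0:V)}ᶜ :=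
    hf_smooth.continuousOn_fderiv_of_isOpen isOpen_compl_singleton (by simp)
  have hInt : ∀ v w : V, IntegrableOn (fun x => fderiv ℝ f x v * fderiv ℝ f x w) K μ := by
    intro v w
    apply ContinuousOn.integrableOn_compact hKcomp
    exact ((hDf_cont.mono hK0).clm_apply continuousOn_const).mul
      ((hDf_cont.mono hK0).clm_apply continuousOn_const)
  -- the bilinear form
  set B : LinearMap.BilinForm ℝ V := LinearMap.mk₂ ℝ
    (fun v w => ∫ x in K, fderiv ℝ f x v * fderiv ℝ f x w ∂μ)
    (by
      intro v v' w
      rw [← integral_add (hInt v w) (hInt v' w)]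
      apply setIntegral_congr_fun hKmeas
      intro x _
      simp [add_mul])
    (by
      intro c v w
      rw [← integral_smul]
      apply setIntegral_congr_fun hKmeas
      intro x _
      simp only [_root_.map_smul, smul_eq_mul]
      ring)
    (by
      intro v w w'
      rw [← integral_add (hInt v w) (hInt v w')]
      apply setIntegral_congr_fun hKmeas
      intro x _
      simp [mul_add])
    (by
      intro c v w
      rw [← integral_smul]
      apply setIntegral_congr_fun hKmeas
      intro x _
      simp only [_root_.map_smul, smul_eq_mul]
      ring) with hB
  have hBapp : ∀ v w : V, B v w = ∫ x in K, fderiv ℝ f x v * fderiv ℝ f x w ∂μ := by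
    intro v w; rw [hB]; rfl
  refine ⟨B, ?_, ?_, ?_⟩
  · -- symmetry
    refine ⟨fun v w => ?_⟩
    rw [hBapp, hBapp]
    apply setIntegral_congr_fun hKmeas
    intro x _
    ring
  · -- positivity
    intro v hv
    rw [hBapp]
    have hnn : 0 ≤ᵐ[μ.restrict K] fun x => fderiv ℝ f x v * fderiv ℝ f x v :=
      Filter.Eventually.of_forall (fun x => mul_self_nonneg _)
    rw [setIntegral_pos_iff_support_of_nonneg_ae hnn (hInt v v)]
    -- find an open subset of positivity
    set x₀ : V := (3 / 2 / Fs v) • v with hx₀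
    have hFsv : 0 < Fs v := hFs_pos v hv
    have hx₀ne : x₀ ≠ 0 := by
      apply smul_ne_zero _ hv
      positivity
    have hx₀Fs : Fs x₀ = 3 / 2 := by
      rw [hx₀, hFs_hom _ (by positivity)]
      field_simp
    have hdfpos : 0 < fderiv ℝ f x₀ v := by
      have h1 : fderiv ℝ f x₀ x₀ = F x₀ ^ 2 := euler_s10 hF hx₀ne
      have h2 : 0 < F x₀ := pos hF hx₀ne
      have h3 : fderiv ℝ f x₀ x₀ = (3 / 2 / Fs v) * fderiv ℝ f x₀ v := by
        conv_lhs => rw [hx₀]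
        rw [ContinuousLinearMap.map_smul, smul_eq_mul]
      have h4 : (3 / 2 / Fs v) * fderiv ℝ f x₀ v = F x₀ ^ 2 := by rw [← h3, h1]
      have h5 : (0:ℝ) < 3 / 2 / Fs v := by positivity
      nlinarith [pow_pos h2 2]
    -- an open set of positivity
    set g : V → ℝ := fun x => fderiv ℝ f x v * fderiv ℝ f x v with hg
    have hgcont : ContinuousOn g {(0:V)}ᶜ :=
      (hDf_cont.clm_apply continuousOn_const).mul (hDf_cont.clm_apply continuousOn_const)
    have hU1 : IsOpen ({(0:V)}ᶜ ∩ g ⁻¹' ({(0:ℝ)}ᶜ)) :=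
      hgcont.isOpen_inter_preimage isOpen_compl_singleton isOpen_compl_singleton
    set U : Set V := ({(0:V)}ᶜ ∩ g ⁻¹' ({(0:ℝ)}ᶜ)) ∩ Fs ⁻¹' (Ioo 1 2) with hU
    have hUopen : IsOpen U := hU1.inter (hFs_cont.isOpen_preimage _ isOpen_Ioo)
    have hx₀U : x₀ ∈ U := by
      refine ⟨⟨hx₀ne, ?_⟩, ?_⟩
      · simp only [mem_preimage, mem_compl_iff, mem_singleton_iff, hg]
        exact (mul_pos hdfpos hdfpos).ne'
      · simp only [mem_preimage, hx₀Fs, mem_Ioo]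
        norm_num
    have hUsub : U ⊆ Function.support g ∩ K := by
      rintro x ⟨⟨-, hgx⟩, hFsx⟩
      refine ⟨hgx, ?_⟩
      simp only [hK, mem_preimage, mem_Icc]
      have := (mem_preimage.mp hFsx : Fs x ∈ Ioo (1:ℝ) 2)
      exact ⟨this.1.le, this.2.le⟩
    calc (0:ENNReal) < μ U := hUopen.measure_pos μ ⟨x₀, hx₀U⟩
      _ ≤ μ (Function.support g ∩ K) := measure_mono hUsub
  · -- invariance
    intro A hA v
    have hAsymm : ∀ x : V, F (A.symm x) = F x := by
      intro x
      conv_rhs => rw [← A.apply_symm_apply x]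
      rw [hA]
    have hFsA : ∀ x : V, Fs (A x) = Fs x := by
      intro x
      simp only [hFs]
      rw [hA, show -(A x) = A (-x) by rw [map_neg], hA]
    have hFsAsymm : ∀ x : V, Fs (A.symm x) = Fs x := by
      intro x
      conv_rhs => rw [← A.apply_symm_apply x]
      rw [hFsA]
    have hpreA : ⇑A ⁻¹' K = K := by
      ext x
      simp only [hK, mem_preimage, hFsA]
    have hpreAsymm : ⇑A.symm ⁻¹' K = K := by
      ext x
      simp only [hK, mem_preimage, hFsAsymm]
    have himg : ⇑A '' K = K := by
      rw [Set.image_eq_preimage_of_inverse A.symm_apply_apply A.apply_symm_apply]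
      exact hpreAsymm
    -- K has positive finite measure
    have hKpos : 0 < μ K := by
      obtain ⟨v₀, hv₀⟩ := exists_ne (0:V)
      have hFsv₀ : 0 < Fs v₀ := hFs_pos v₀ hv₀
      set y₀ : V := (3 / 2 / Fs v₀) • v₀ with hy₀
      have hy₀Fs : Fs y₀ = 3 / 2 := by
        rw [hy₀, hFs_hom _ (by positivity)]
        field_simp
      have hy₀K : y₀ ∈ K := by
        simp only [hK, mem_preimage, mem_Icc, hy₀Fs]
        norm_num
      have hsub : Fs ⁻¹' (Ioo 1 2) ⊆ K := by
        intro x hx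
        have := (mem_preimage.mp hx : Fs x ∈ Ioo (1:ℝ) 2)
        simp only [hK, mem_preimage, mem_Icc]
        exact ⟨this.1.le, this.2.le⟩
      have hopen : IsOpen (Fs ⁻¹' (Ioo 1 2)) := hFs_cont.isOpen_preimage _ isOpen_Ioo
      have hmem : y₀ ∈ Fs ⁻¹' (Ioo 1 2) := by
        simp only [mem_preimage, hy₀Fs, mem_Ioo]
        norm_num
      calc (0:ENNReal) < μ (Fs ⁻¹' (Ioo 1 2)) := hopen.measure_pos μ ⟨y₀, hmem⟩
        _ ≤ μ K := measure_mono hsub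
    have hKfin : μ K < ⊤ := hKcomp.measure_lt_top
    -- determinant of A has absolute value 1
    have hdet1 : |LinearMap.det (A : V →ₗ[ℝ] V)| = 1 := by
      have h1 : μ (⇑A '' K) = ENNReal.ofReal |LinearMap.det (A : V →ₗ[ℝ] V)| * μ K :=
        Measure.addHaar_image_linearMap μ (A : V →ₗ[ℝ] V) K
      rw [himg] at h1
      have h2 : μ K * ENNReal.ofReal |LinearMap.det (A : V →ₗ[ℝ] V)| = μ K := by
        rw [mul_comm]; exact h1.symm
      have h3 := (ENNReal.mul_eq_left hKpos.ne' hKfin.ne).mp h2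
      exact ENNReal.ofReal_eq_one.mp h3
    have hdetsymm1 : |LinearMap.det (A.symm : V →ₗ[ℝ] V)| = 1 := by
      have h1 : μ (⇑A.symm '' K) = ENNReal.ofReal |LinearMap.det (A.symm : V →ₗ[ℝ] V)| * μ K :=
        Measure.addHaar_image_linearMap μ (A.symm : V →ₗ[ℝ] V) K
      have himg2 : ⇑A.symm '' K = K := by
        rw [Set.image_eq_preimage_of_inverse A.apply_symm_apply A.symm_apply_apply]
        exact hpreA
      rw [himg2] at h1
      have h2 : μ K * ENNReal.ofReal |LinearMap.det (A.symm : V →ₗ[ℝ] V)| = μ K := by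
        rw [mul_comm]; exact h1.symm
      have h3 := (ENNReal.mul_eq_left hKpos.ne' hKfin.ne).mp h2
      exact ENNReal.ofReal_eq_one.mp h3
    -- the derivative transforms equivariantly
    have hfA : ∀ x : V, f (A x) = f x := by
      intro x
      simp only [hfdef, hA]
    have hDfA : ∀ x : V, x ≠ 0 → ∀ u : V, fderiv ℝ f x u = fderiv ℝ f (A x) (A u) := by
      intro x hx u
      set Ac : V →L[ℝ] V := LinearMap.toContinuousLinearMap (A : V →ₗ[ℝ] V) with hAc
      have hAx : A x ≠ 0 := by
        intro h
        apply hx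
        have := congrArg A.symm h
        rwa [A.symm_apply_apply, map_zero] at this
      have hdiff : DifferentiableAt ℝ f (A x) := by
        have : ContDiffAt ℝ (⊤ : ℕ∞) f (A x) :=
          hf_smooth.contDiffAt (isOpen_compl_singleton.mem_nhds hAx)
        exact this.differentiableAt (by simp)
      have hcomp : HasFDerivAt (f ∘ ⇑Ac) ((fderiv ℝ f (A x)).comp Ac) x :=
        hdiff.hasFDerivAt.comp x Ac.hasFDerivAt
      have hcompf : (f ∘ ⇑Ac) = f := by
        funext y
        simp only [Function.comp_apply, hAc]
        rw [show (LinearMap.toContinuousLinearMap (A : V →ₗ[ℝ] V)) y = A y from rfl, hfA]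
      rw [hcompf] at hcomp
      have : fderiv ℝ f x = (fderiv ℝ f (A x)).comp Ac := hcomp.fderiv
      rw [this]
      rfl
    -- rewrite the integrand
    rw [hBapp, hBapp]
    have hcongr : ∀ x ∈ K, fderiv ℝ f x (A v) * fderiv ℝ f x (A v) =
        fderiv ℝ f (A.symm x) v * fderiv ℝ f (A.symm x) v := by
      intro x hxK
      have hx0 : x ≠ 0 := hK0 hxK
      have hsymm0 : A.symm x ≠ 0 := by
        intro h
        apply hx0
        have := congrArg A h
        rwa [A.apply_symm_apply, map_zero] at this
      have := hDfA (A.symm x) hsymm0 v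
      rw [A.apply_symm_apply] at this
      rw [← this]
    rw [setIntegral_congr_fun hKmeas hcongr]
    -- change of variables
    set T : V → V := ⇑A.symm with hT
    have hTlin : T = ⇑(A.symm : V →ₗ[ℝ] V) := rfl
    have hTcont : Continuous T := by
      rw [hTlin]
      exact LinearMap.continuous_of_finiteDimensional _
    have hdetsymm0 : LinearMap.det (A.symm : V →ₗ[ℝ] V) ≠ 0 := by
      intro h
      rw [h] at hdetsymm1
      simp at hdetsymm1
    have hmap : Measure.map T μ = μ := by
      rw [hTlin, Measure.map_linearMap_addHaar_eq_smul_addHaar μ hdetsymm0]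
      rw [abs_inv, hdetsymm1]
      simp
    set h : V → ℝ := fun y => fderiv ℝ f y v * fderiv ℝ f y v with hh
    have hmeas : AEStronglyMeasurable h (Measure.map T μ) := by
      apply Measurable.aestronglyMeasurable
      exact ((measurable_fderiv_apply_const ℝ f v).mul (measurable_fderiv_apply_const ℝ f v))
    have := setIntegral_map (μ := μ) (g := T) (f := h) (s := K) hKmeas hmeas
      hTcont.measurable.aemeasurable
    rw [hmap] at this
    have hTpre : T ⁻¹' K = K := hpreAsymm
    rw [hTpre] at this
    exact this.symm

end MinkAux

/-- The isometry group `G` of a Minkowski space `(V, F)` contains all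
translations, leaves some Euclidean inner product invariant, and is the
semidirect product of the translation subgroup with the isotropy subgroup `L`
at the origin: every isometry is uniquely a translation composed with an
origin-preserving isometry. -/
theorem minkowski_isometry_group_structure
    {V : Type*} [NormedAddCommGroup V] [NormedSpace ℝ V] [FiniteDimensional ℝ V]
    (F : V → ℝ) (hF : IsMinkowskiNorm F) :
    (∀ a : V, IsMinkowskiIsometry F (fun v => v + a)) ∧
    (∃ B : LinearMap.BilinForm ℝ V, B.IsSymm ∧ (∀ v : V, v ≠ 0 → 0 < B v v) ∧
      ∀ σ : V → V, IsMinkowskiIsometry F σ →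
        ∀ x y : V, B (σ y - σ x) (σ y - σ x) = B (y - x) (y - x)) ∧
    (∀ σ : V → V, IsMinkowskiIsometry F σ →
      ∃! p : V × (V → V), IsMinkowskiIsometry F p.2 ∧ p.2 0 = 0 ∧
        σ = fun v => p.2 v + p.1) := by
  classical
  refine ⟨?_, ?_, ?_⟩
  · -- translations
    intro a
    refine ⟨(Equiv.addRight a).bijective, ?_⟩
    intro x y
    simp [minkDist]
  · -- invariant inner product
    rcases subsingleton_or_nontrivial V with hs | hs
    · refine ⟨0, ?_, ?_, ?_⟩
      · refine ⟨fun x y => ?_⟩; simp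
      · intro v hv; exact absurd (Subsingleton.elim v 0) hv
      · intro σ hσ x y; simp
    · obtain ⟨B, hsymm, hpos, hinv⟩ := MinkAux.exists_invariant_form F hF
      refine ⟨B, hsymm, hpos, ?_⟩
      intro σ hσ x y
      set τ : V → V := fun v => σ v - σ 0 with hτdef
      have hτbij : Function.Bijective τ := (Equiv.subRight (σ 0)).bijective.comp hσ.1
      have hτiso : ∀ x y : V, F (τ y - τ x) = F (y - x) := by
        intro x y
        have h := hσ.2 x y
        simpa [minkDist, hτdef, sub_sub_sub_cancel_right] using h
      have hτ0 : τ 0 = 0 := by simp [hτdef]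
      obtain ⟨hadd, hsmul⟩ := MinkAux.isometry_linear hF hτbij hτiso hτ0
      let lin : V →ₗ[ℝ] V := IsLinearMap.mk' τ ⟨hadd, hsmul⟩
      let L : V ≃ₗ[ℝ] V := LinearEquiv.ofBijective lin hτbij
      have hLcoe : ∀ u : V, L u = τ u := fun u => rfl
      have hLF : ∀ u : V, F (L u) = F u := by
        intro u
        rw [hLcoe]
        have := hτiso 0 u
        rwa [hτ0, sub_zero, sub_zero] at this
      have hdiff : σ y - σ x = L (y - x) := by
        rw [map_sub, hLcoe, hLcoe]
        simp [hτdef]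
      rw [hdiff]
      exact hinv L hLF (y - x)
  · -- semidirect product decomposition
    intro σ hσ
    have hbij : Function.Bijective (fun v => σ v - σ 0) :=
      (Equiv.subRight (σ 0)).bijective.comp hσ.1
    have hiso : IsMinkowskiIsometry F (fun v => σ v - σ 0) := by
      refine ⟨hbij, ?_⟩
      intro x y
      have h := hσ.2 x y
      simpa [minkDist, sub_sub_sub_cancel_right] using h
    refine ⟨(σ 0, fun v => σ v - σ 0), ⟨hiso, by simp, by funext v; simp⟩, ?_⟩
    rintro ⟨a, τ⟩ ⟨hτiso, hτ0, heq⟩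
    have ha : a = σ 0 := by
      have := congrFun heq 0
      rw [this, hτ0, zero_add]
    have hτ : τ = fun v => σ v - σ 0 := by
      funext v
      have := congrFun heq v
      rw [this, ha]
      simp
    simp only [Prod.mk.injEq]
    exact ⟨ha, hτ⟩


end

end
end

section
/- Every Clifford translation of a Minkowski space (V, F) is an ordinary translation v ↦ v + a of the underlying affine space. -/
open scoped Manifold
open Set

noncomputable section

noncomputable section

section MinkAux

variable {V : Type*} [NormedAddCommGroup V] [NormedSpace ℝ V] {F : V → ℝ}

theorem mink_zero (hF : IsMinkowskiNorm F) : F (0:V) = 0 := by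
  have h := hF.pos_hom 2 two_pos 0
  rw [smul_zero] at h
  linarith

theorem mink_sco (hF : IsMinkowskiNorm F) {a b : V} (hab : a ≠ b)
    (h0 : ∀ t ∈ Icc (0:ℝ) 1, a + t • (b - a) ≠ (0:V)) :
    StrictConvexOn ℝ (Icc (0:ℝ) 1) (fun t => F (a + t • (b - a)) ^ 2 / 2) := by
  have hg : ContDiffOn ℝ (⊤ : ℕ∞) (fun y => F y ^ 2 / 2) {(0:V)}ᶜ :=
    (hF.smooth_on.pow 2).div_const 2
  set g : V → ℝ := fun y => F y ^ 2 / 2 with hgdef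
  set d : V := b - a with hd
  have hdne : d ≠ 0 := sub_ne_zero.2 (Ne.symm hab)
  set z : ℝ → V := fun t => a + t • d with hzdef
  have hzc : Continuous z := continuous_const.add (continuous_id.smul continuous_const)
  have hzd : ∀ t : ℝ, HasDerivAt z d t := by
    intro t
    have := ((hasDerivAt_id t).smul_const d).const_add a
    rw [one_smul] at this
    exact this
  have hD1 : ∀ s : ℝ, z s ≠ 0 → HasDerivAt (fun u => g (z u)) (fderiv ℝ g (z s) d) s := by
    intro s hs
    have hgs : DifferentiableAt ℝ g (z s) :=
      (hg.contDiffAt (isOpen_compl_singleton.mem_nhds (by simpa using hs))).differentiableAt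
        (by simp)
    exact hgs.hasFDerivAt.comp_hasDerivAt s (hzd s)
  have hD2 : ∀ t : ℝ, z t ≠ 0 → HasDerivAt (fun s => fderiv ℝ g (z s) d)
      (fderiv ℝ (fderiv ℝ g) (z t) d d) t := by
    intro t ht
    have hct : ContDiffAt ℝ (⊤ : ℕ∞) g (z t) :=
      hg.contDiffAt (isOpen_compl_singleton.mem_nhds (by simpa using ht))
    have h1 : ContDiffAt ℝ 1 (fderiv ℝ g) (z t) := hct.fderiv_right (WithTop.coe_le_coe.2 le_top)
    have h2 : HasFDerivAt (fderiv ℝ g) (fderiv ℝ (fderiv ℝ g) (z t)) (z t) :=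
      (h1.differentiableAt one_ne_zero).hasFDerivAt
    have h3 := h2.clm_apply (hasFDerivAt_const d (z t))
    have h4 := h3.comp_hasDerivAt t (hzd t)
    simp at h4
    exact h4
  apply strictConvexOn_of_deriv2_pos (convex_Icc 0 1)
  · exact hg.continuousOn.comp hzc.continuousOn (fun t ht => by simpa using h0 t ht)
  · intro t ht
    rw [interior_Icc] at ht
    have hzt : z t ≠ 0 := h0 t (Ioo_subset_Icc_self ht)
    have hev : ∀ᶠ s in nhds t, z s ≠ 0 := hzc.continuousAt.eventually_ne hzt
    have heq : deriv (fun s => g (z s)) =ᶠ[nhds t] fun s => fderiv ℝ g (z s) d :=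
      hev.mono fun s hs => (hD1 s hs).deriv
    have h5 : deriv^[2] (fun s => g (z s)) t = fderiv ℝ (fderiv ℝ g) (z t) d d := by
      show deriv (deriv (fun s => g (z s))) t = _
      rw [heq.deriv_eq]
      exact (hD2 t hzt).deriv
    rw [h5]
    exact hF.hessian_posdef (z t) hzt d hdne

theorem mink_pos (hF : IsMinkowskiNorm F) {v : V} (hv : v ≠ 0) : 0 < F v := by
  rcases (hF.nonneg v).lt_or_eq with h | h
  · exact h
  exfalso
  have hab : v ≠ v + v := by
    intro hcon
    apply hv
    have : v + 0 = v + v := by rw [add_zero]; exact hcon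
    exact ((add_right_inj v).1 this).symm
  have h0 : ∀ t ∈ Icc (0:ℝ) 1, v + t • (v + v - v) ≠ (0:V) := by
    intro t ht hzero
    apply hv
    rw [add_sub_cancel_right] at hzero
    have h1 : (1 + t) • v = 0 := by rw [add_smul, one_smul]; exact hzero
    have h1t : (1:ℝ) + t ≠ 0 := by have := ht.1; intro hc; linarith
    exact (smul_eq_zero.1 h1).resolve_left h1t
  have hval : ∀ t ∈ Icc (0:ℝ) 1, F (v + t • (v + v - v)) = 0 := by
    intro t ht
    rw [add_sub_cancel_right, show v + t • v = (1 + t) • v from by rw [add_smul, one_smul],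
      hF.pos_hom (1 + t) (by have := ht.1; linarith) v, ← h, mul_zero]
  have sco := mink_sco hF hab h0
  have h2 := sco.2 (left_mem_Icc.2 (by norm_num)) (right_mem_Icc.2 (by norm_num))
    (by norm_num) (by norm_num : (0:ℝ) < 1/2) (by norm_num : (0:ℝ) < 1/2) (by norm_num)
  simp only [smul_eq_mul, mul_zero, mul_one, zero_add] at h2
  rw [hval 0 (by norm_num), hval 1 (by norm_num), hval (1/2) (by norm_num)] at h2
  norm_num at h2

theorem mink_add (hF : IsMinkowskiNorm F) (u w : V) : F (u + w) ≤ F u + F w := by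
  by_cases hu : u = 0
  · rw [hu, zero_add, mink_zero hF, zero_add]
  by_cases hw : w = 0
  · rw [hw, add_zero, mink_zero hF, add_zero]
  by_cases hdep : ∃ s : ℝ, w = s • u
  · obtain ⟨s, rfl⟩ := hdep
    have hFu := hF.nonneg u
    have hFnu := hF.nonneg (-u)
    have e1 : u + s • u = (1 + s) • u := by rw [add_smul, one_smul]
    rcases lt_trichotomy s 0 with hs | hs | hs
    · have e2 : F (s • u) = (-s) * F (-u) := by
        rw [show s • u = (-s) • (-u) from by simp, hF.pos_hom _ (by linarith) _]
      rcases lt_trichotomy (1 + s) 0 with h1 | h1 | h1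
      · have e3 : F (u + s • u) = (-(1+s)) * F (-u) := by
          rw [e1, show (1+s) • u = (-(1+s)) • (-u) from (neg_smul_neg _ _).symm,
            hF.pos_hom _ (by linarith) _]
        rw [e3, e2]; nlinarith
      · rw [e1, show (1+s) • u = (0:V) from by rw [h1, zero_smul], mink_zero hF, e2]
        nlinarith
      · rw [e1, hF.pos_hom _ h1 u, e2]; nlinarith
    · exact absurd (by rw [hs, zero_smul]) hw
    · rw [e1, hF.pos_hom _ (by linarith) u, hF.pos_hom _ hs u]
      nlinarith
  · have hFu := mink_pos hF hu
    have hFw := mink_pos hF hw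
    set p : V := (F u)⁻¹ • u with hp
    set q : V := (F w)⁻¹ • w with hq
    have hFp : F p = 1 := by
      rw [hp, hF.pos_hom _ (inv_pos.2 hFu) u, inv_mul_cancel₀ hFu.ne']
    have hFq : F q = 1 := by
      rw [hq, hF.pos_hom _ (inv_pos.2 hFw) w, inv_mul_cancel₀ hFw.ne']
    have hpq : p ≠ q := by
      intro hcon
      apply hdep
      have h2 : (F w) • ((F w)⁻¹ • w) = (F w) • ((F u)⁻¹ • u) := by rw [← hp, ← hq, hcon]
      rw [smul_smul, smul_smul, mul_inv_cancel₀ hFw.ne', one_smul] at h2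
      exact ⟨F w * (F u)⁻¹, h2⟩
    have hcomb : ∀ t : ℝ, p + t • (q - p) = (1 - t) • p + t • q := by
      intro t
      rw [smul_sub, sub_smul, one_smul]; abel
    have h0 : ∀ t ∈ Icc (0:ℝ) 1, p + t • (q - p) ≠ (0:V) := by
      intro t ht hzero
      rw [hcomb t] at hzero
      by_cases ht0 : t = 0
      · rw [ht0, zero_smul, add_zero, sub_zero, one_smul, hp] at hzero
        exact hu ((smul_eq_zero.1 hzero).resolve_left (inv_ne_zero hFu.ne'))
      · apply hdep
        have h3 : (t * (F w)⁻¹) • w = -(((1 - t) * (F u)⁻¹) • u) := by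
          rw [mul_smul, mul_smul, ← hp, ← hq]
          exact (neg_eq_of_add_eq_zero_left (by rw [← hzero]; abel)).symm
        have htw : t * (F w)⁻¹ ≠ 0 := mul_ne_zero ht0 (inv_ne_zero hFw.ne')
        have h4 := congrArg (fun y => (t * (F w)⁻¹)⁻¹ • y) h3
        simp only [smul_smul, inv_mul_cancel₀ htw, one_smul] at h4
        rw [smul_neg, ← neg_smul, smul_smul] at h4
        exact ⟨_, h4⟩
    have hco := (mink_sco hF hpq h0).convexOn
    set lam : ℝ := F w / (F u + F w) with hlam
    have hS : 0 < F u + F w := by linarith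
    have hl0 : 0 ≤ 1 - lam := by
      rw [hlam, sub_nonneg]
      exact div_le_one_of_le₀ (by linarith) hS.le
    have hl1 : 0 ≤ lam := div_nonneg hFw.le hS.le
    have key := hco.2 (left_mem_Icc.2 (by norm_num)) (right_mem_Icc.2 (by norm_num))
      hl0 hl1 (by ring)
    simp only [smul_eq_mul, mul_zero, mul_one, zero_add] at key
    have harg0 : p + (0:ℝ) • (q - p) = p := by rw [zero_smul, add_zero]
    have harg1 : p + (1:ℝ) • (q - p) = q := by rw [one_smul]; abel
    rw [harg0, harg1, hFp, hFq] at key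
    have hargl : p + lam • (q - p) = (F u + F w)⁻¹ • (u + w) := by
      rw [hcomb lam, hp, hq, smul_smul, smul_smul, smul_add]
      congr 1
      · congr 1
        rw [hlam]; field_simp; ring
      · congr 1
        rw [hlam]; field_simp
    rw [hargl, hF.pos_hom _ (inv_pos.2 hS) (u + w)] at key
    have hX := hF.nonneg (u + w)
    have hkey : ((F u + F w)⁻¹ * F (u + w)) ^ 2 ≤ 1 := by nlinarith
    have h5 : (F u + F w)⁻¹ * F (u + w) ≤ 1 := by
      nlinarith [mul_nonneg (inv_nonneg.2 hS.le) hX]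
    calc F (u + w) = (F u + F w) * ((F u + F w)⁻¹ * F (u + w)) := by
          field_simp
      _ ≤ (F u + F w) * 1 := by nlinarith
      _ = F u + F w := mul_one _

end MinkAux

/-- Type synonym used to endow `V` with the symmetrized norm of `F`. -/
def MinkSyn {V : Type*} (_F : V → ℝ) : Type _ := V

/-- Every Clifford translation of a Minkowski space (an isometry whose
displacement `d(x, σ x) = F (σ x - x)` is constant) is an ordinary translation. -/
theorem minkowski_clifford_is_translation
    {V : Type*} [NormedAddCommGroup V] [NormedSpace ℝ V] [FiniteDimensional ℝ V]
    (F : V → ℝ) (hF : IsMinkowskiNorm F) (σ : V → V)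
    (hσ : IsMinkowskiIsometry F σ)
    (hclifford : ∃ c : ℝ, ∀ x : V, minkDist F x (σ x) = c) :
    ∃ a : V, σ = fun v => v + a := by
  obtain ⟨c, hc⟩ := hclifford
  have hcx : ∀ x : V, F (σ x - x) = c := fun x => hc x
  have hiso : ∀ x y : V, F (σ y - σ x) = F (y - x) := hσ.2
  letI : AddCommGroup (MinkSyn F) := inferInstanceAs (AddCommGroup V)
  letI : Module ℝ (MinkSyn F) := inferInstanceAs (Module ℝ V)
  letI : NormedAddCommGroup (MinkSyn F) := AddGroupNorm.toNormedAddCommGroup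
    { toFun := fun v => F v + F (-v)
      map_zero' := by
        show F (0:V) + F (-(0:V)) = 0
        rw [neg_zero, mink_zero hF]; ring
      add_le' := by
        intro r s
        show F (r + s) + F (-(r + s)) ≤ (F r + F (-r)) + (F s + F (-s))
        have h1 := mink_add hF r s
        have h2 := mink_add hF (-s) (-r)
        rw [show -(r + s) = -s + -r from by abel]
        exact (fun (r s : V) (h1 : F (r + s) ≤ F r + F s) (h2 : F (-s + -r) ≤ F (-s) + F (-r)) =>
          (by linarith : F (r + s) + F (-s + -r) ≤ (F r + F (-r)) + (F s + F (-s)))) r s h1 h2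
      neg' := by
        intro r
        show F (-r) + F (-(-r)) = F r + F (-r)
        rw [neg_neg]; ring
      eq_zero_of_map_eq_zero' := by
        intro x hx
        by_contra hne
        have h1 : 0 < F x := mink_pos hF hne
        have h2 := hF.nonneg (-x)
        have hx' : F x + F (-x) = 0 := hx
        linarith }
  letI : NormedSpace ℝ (MinkSyn F) :=
    { (inferInstance : Module ℝ (MinkSyn F)) with
      norm_smul_le := by
        intro t x
        show F (t • x) + F (-(t • x)) ≤ ‖t‖ * (F x + F (-x))
        suffices h : ∀ x : V, F (t • x) + F (-(t • x)) ≤ ‖t‖ * (F x + F (-x)) from h x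
        intro x
        rw [Real.norm_eq_abs]
        rcases lt_trichotomy t 0 with ht | ht | ht
        · rw [abs_of_neg ht, show t • x = (-t) • (-x) from (neg_smul_neg t x).symm,
            hF.pos_hom _ (by linarith) _,
            show -((-t) • (-x) : V) = (-t) • x from by rw [neg_smul_neg, neg_smul],
            hF.pos_hom _ (by linarith) _]
          apply le_of_eq; ring
        · rw [ht, zero_smul, abs_zero, neg_zero, mink_zero hF, zero_mul]
          norm_num
        · rw [abs_of_pos ht, hF.pos_hom _ ht,
            show -(t • x : V) = t • (-x) from by rw [smul_neg],
            hF.pos_hom _ ht]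
          apply le_of_eq; ring }
  let e : MinkSyn F ≃ MinkSyn F := Equiv.ofBijective σ hσ.1
  have hisom : Isometry (e : MinkSyn F → MinkSyn F) := by
    apply Isometry.of_dist_eq
    intro x y
    rw [dist_eq_norm, dist_eq_norm]
    show F (σ x - σ y) + F (-(σ x - σ y)) = F ((x : V) - y) + F (-((x : V) - y))
    suffices h : ∀ x y : V, F (σ x - σ y) + F (-(σ x - σ y)) = F (x - y) + F (-(x - y)) from h x y
    intro x y
    rw [neg_sub, neg_sub, hiso y x, hiso x y]
  let σI : MinkSyn F ≃ᵢ MinkSyn F := ⟨e, hisom⟩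
  let A := σI.toRealLinearIsometryEquiv
  have hA : ∀ x : V, A x = σ x - σ 0 := fun x => σI.toRealLinearIsometryEquiv_apply x
  have hsmul : ∀ (t : ℝ) (x : V), σ (t • x) - σ 0 = t • (σ x - σ 0) := by
    intro t x
    have h := A.map_smul t x
    exact (hA (t • x)).symm.trans ((A.map_smul t x).trans (congrArg (fun y => t • y) (hA x)))
  refine ⟨σ 0, ?_⟩
  funext v
  show σ v = v + σ 0
  rw [← sub_eq_iff_eq_add]
  by_contra hne
  have hu : σ v - σ 0 - v ≠ 0 := sub_ne_zero.2 hne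
  set u : V := σ v - σ 0 - v with hudef
  have key : ∀ t : ℝ, 0 < t → F (t • u + σ 0) = c := by
    intro t ht
    have h1 := hcx (t • v)
    have h2 : σ (t • v) - t • v = t • u + σ 0 := by
      have h4 : σ (t • v) = t • (σ v - σ 0) + σ 0 := by
        rw [← hsmul t v]; abel
      rw [h4, hudef]; module
    rw [h2] at h1
    exact h1
  have bound : ∀ t : ℝ, 0 < t → t * F u ≤ c + F (-σ 0) := by
    intro t ht
    have h5 := mink_add hF (t • u + σ 0) (-σ 0)
    rw [key t ht, show (t • u + σ 0) + -σ 0 = t • u from by abel,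
      hF.pos_hom t ht u] at h5
    exact h5
  have hFu : 0 < F u := mink_pos hF hu
  have hc0 : 0 ≤ c := by rw [← hcx 0]; exact hF.nonneg _
  have hFn : 0 ≤ F (-σ 0) := hF.nonneg _
  have hb := bound ((c + F (-σ 0) + 1) / F u) (div_pos (by linarith) hFu)
  rw [div_mul_cancel₀ _ hFu.ne'] at hb
  linarith

end

end
end
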